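/- arXiv:2108.00260 — 5 statements merged into one kernel-verified Lean document; each statement's English description precedes it below -/
import Mathlib

section
/- Let W be a Coxeter group with generating set {s_i}_{i∈I}, let τ be an automorphism of W permuting the generators with τ² = id, and let w ∈ W satisfy τ(w) = w⁻¹ (a τ-twisted involution). Then there exist v ∈ W and a subset X ⊆ I generating a finite parabolic subgroup W_X with longest element w_X such that τ restricted to X equals the opposition involution of X (i.e. w_X s_i w_X = s_{τ(i)} for all i ∈ X) and w = v · w_X · τ(v)⁻¹. -/
/-!
Induct on `ℓ w`. If some left descent `i` of `w` has `sᵢ w s_{τ i} ≠ w`, then applying `φ` shows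
that `τ i` is a right descent, so `sᵢ w s_{τ i}` is a shorter twisted involution, and `v` absorbs
`sᵢ`. Otherwise let `X` be the left descent set; then `w⁻¹ u w = φ u` on all of `W_X`, which
forces `ℓ u + ℓ (u⁻¹ w) = ℓ w` for `u ∈ W_X`. Right descents of `w` are `τ`-images of `X`, so `w`
lies in `W_X` and is its longest element; `w² = φ(w) w = 1` then turns `w⁻¹ sᵢ w = s_{τ i}` into
the opposition property, and `W_X` is finite because its elements are words of length `≤ ℓ w`
in the finitely many `sᵢ`, `i ∈ X`.

All of this rests on the exchange property, derived here from Tits' permutation representation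
of `W`: the parity of the number of occurrences of `t` in the left inversion sequence of a word
depends only on the product of the word.
-/

theorem inv_mul_mul_eq_of_mem_closure {G : Type*} [Group G] (φ : G →* G) {S : Set G} {w : G}
    (hS : ∀ x ∈ S, w⁻¹ * x * w = φ x) {u : G} (hu : u ∈ Subgroup.closure S) :
    w⁻¹ * u * w = φ u := by
  simpa using MonoidHom.eqOn_closure (f := (MulAut.conj w⁻¹).toMonoidHom) (g := φ)
    (fun x hx => by simpa using hS x hx) hu

namespace CoxeterSystem

open List

variable {B W : Type*} [Group W] {M : CoxeterMatrix B} (cs : CoxeterSystem M W)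

local prefix:100 "s " => cs.simple
local prefix:100 "π " => cs.wordProd
local prefix:100 "ℓ " => cs.length
local prefix:100 "lis " => cs.leftInvSeq

theorem _root_.CoxeterMatrix.prod_map_alternatingWord_two_mul {G : Type*} [Monoid G]
    (f : B → G) (i i' : B) (m : ℕ) :
    ((alternatingWord i i' (2 * m)).map f).prod = (f i * f i') ^ m := by
  induction m with
  | zero => simp [alternatingWord]
  | succ m ih =>
    have hparity : ¬Even (2 * m + 1) := by simp [parity_simps]
    rw [show 2 * (m + 1) = 2 * m + 1 + 1 by ring, alternatingWord_succ', alternatingWord_succ',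
      if_neg hparity, if_pos (even_two_mul m), map_cons, map_cons, prod_cons, prod_cons, ih,
      pow_succ', mul_assoc]

theorem count_leftInvSeq_braid_even [DecidableEq W] (i j : B) (t : W) :
    Even ((lis (alternatingWord i j (2 * M i j))).count t) := by
  set L := lis (alternatingWord i j (2 * M i j))
  -- `L[k] = sᵢ (sⱼ sᵢ)ᵏ`, so `L` is two copies of its first half
  have hperiodic : ∀ k, π alternatingWord j i (2 * (M i j + k) + 1) =
      π alternatingWord j i (2 * k + 1) := by
    intro k
    simp only [prod_alternatingWord_eq_mul_pow, Nat.not_even_two_mul_add_one, if_false,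
      show ∀ n, (2 * n + 1) / 2 = n by omega, pow_add, M.symmetric i j,
      cs.simple_mul_simple_pow, one_mul]
  have hdrop : L.drop (M i j) = L.take (M i j) := by
    apply List.ext_getElem (by simp [L]; omega)
    intro k h₁ h₂
    simp only [L, getElem_drop, getElem_take]
    rw [getElem_leftInvSeq_alternatingWord _ _ _ _ _ (by simp [L] at h₁; omega),
      getElem_leftInvSeq_alternatingWord _ _ _ _ _ (by simp [L] at h₁; omega), hperiodic]
  rw [← List.take_append_drop (M i j) L, List.count_append, hdrop]
  exact ⟨_, rfl⟩

theorem simple_mul_mul_simple_eq_simple_iff (i : B) (t : W) : s i * t * s i = s i ↔ t = s i := by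
  constructor <;> intro h
  · simpa [mul_assoc] using congrArg (fun x => s i * x * s i) h
  · simp [h]

section TitsRepresentation

variable [DecidableEq W]

/-- Tits' permutation `(t, ε) ↦ (sᵢ t sᵢ, ε + [t = sᵢ])`, the one of Björner–Brenti §1.4 with
the set of reflections enlarged to all of `W` and the sign `±1` written additively. -/
def titsPerm (i : B) : Equiv.Perm (W × ZMod 2) :=
  Function.Involutive.toPerm (fun p => (s i * p.1 * s i, p.2 + if p.1 = s i then 1 else 0))
    (by
      rintro ⟨t, ε⟩
      by_cases ht : t = s i
      · simp [ht, add_assoc, show (1 : ZMod 2) + 1 = 0 by decide]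
      · simp only [ht, cs.simple_mul_mul_simple_eq_simple_iff, if_false, add_zero]
        simp [mul_assoc])

theorem titsPerm_apply (i : B) (p : W × ZMod 2) :
    cs.titsPerm i p = (s i * p.1 * s i, p.2 + if p.1 = s i then 1 else 0) := rfl

theorem prod_map_titsPerm (ω : List B) (t : W) (ε : ZMod 2) :
    (ω.map cs.titsPerm).prod (t, ε) =
      (π ω * t * (π ω)⁻¹, ε + (lis ω).count (π ω * t * (π ω)⁻¹)) := by
  induction ω with
  | nil => simp
  | cons i ω ih =>
    set u := π ω * t * (π ω)⁻¹
    have hcount : (lis (i :: ω)).count (s i * u * s i) =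
        (lis ω).count u + if u = s i then 1 else 0 := by
      have hconj : s i * u * s i = MulAut.conj (s i) u := by simp
      rw [leftInvSeq, count_cons, hconj,
        count_map_of_injective _ _ (MulAut.conj (s i)).injective, ← hconj]
      simp only [beq_iff_eq, eq_comm (a := s i), cs.simple_mul_mul_simple_eq_simple_iff]
    have hu : π (i :: ω) * t * (π (i :: ω))⁻¹ = s i * u * s i := by
      simp [u, wordProd_cons, mul_assoc]
    rw [map_cons, prod_cons, Equiv.Perm.mul_apply, ih, titsPerm_apply, hu, hcount]
    push_cast
    rw [add_assoc]

theorem isLiftable_titsPerm : M.IsLiftable cs.titsPerm := by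
  intro i i'
  ext p : 1
  have hword : π (alternatingWord i i' (2 * M i i')) = 1 := by
    rw [wordProd, CoxeterMatrix.prod_map_alternatingWord_two_mul, cs.simple_mul_simple_pow]
  obtain ⟨t, ε⟩ := p
  rw [← CoxeterMatrix.prod_map_alternatingWord_two_mul, prod_map_titsPerm, hword,
    (ZMod.natCast_eq_zero_iff_even).mpr (cs.count_leftInvSeq_braid_even i i' _)]
  simp

def titsRep : W →* Equiv.Perm (W × ZMod 2) := cs.lift ⟨cs.titsPerm, cs.isLiftable_titsPerm⟩

theorem titsRep_wordProd (ω : List B) : cs.titsRep (π ω) = (ω.map cs.titsPerm).prod := by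
  rw [wordProd, map_list_prod, List.map_map]
  congr 1
  exact List.map_congr_left fun i _ => cs.lift_apply_simple cs.isLiftable_titsPerm i

theorem count_leftInvSeq_cast_eq_of_wordProd_eq {ω ω' : List B} (h : π ω = π ω') (t : W) :
    ((lis ω).count t : ZMod 2) = (lis ω').count t := by
  have := congrArg (fun f => (f ((π ω')⁻¹ * t * π ω', 0)).2) (congrArg cs.titsRep h)
  simp only [titsRep_wordProd, prod_map_titsPerm, zero_add] at this
  rwa [h, show π ω' * ((π ω')⁻¹ * t * π ω') * (π ω')⁻¹ = t by group] at this

end TitsRepresentation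

theorem simple_mem_leftInvSeq {ω : List B} {j : B}
    (hj : cs.IsLeftDescent (π ω) j) : s j ∈ lis ω := by
  classical
  obtain ⟨κ, hκred, hκ⟩ := cs.exists_isReduced (s j * π ω)
  have hω' : π ω = π (j :: κ) := by rw [wordProd_cons, ← hκ, simple_mul_simple_cancel_left]
  have hnotin : s j ∉ lis κ := fun h => by
    have := (cs.isLeftInversion_of_mem_leftInvSeq hκred h).2
    rw [← hκ, simple_mul_simple_cancel_left] at this
    exact lt_asymm hj this
  have hcount : (lis (j :: κ)).count (s j) = 1 := by
    rw [leftInvSeq, count_cons_self, Nat.add_eq_right, count_eq_zero]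
    rintro h
    obtain ⟨x, hx, hxj⟩ := mem_map.mp h
    rw [MulAut.conj_apply, inv_simple, simple_mul_mul_simple_eq_simple_iff] at hxj
    exact hnotin (hxj ▸ hx)
  have := cs.count_leftInvSeq_cast_eq_of_wordProd_eq hω' (s j)
  rw [hcount] at this
  by_contra hmem
  rw [count_eq_zero_of_not_mem hmem] at this
  exact absurd this (by decide)

theorem leftInvSeq_append (ω ω' : List B) :
    lis (ω ++ ω') = lis ω ++ (lis ω').map (MulAut.conj (π ω)) := by
  induction ω with
  | nil => simp
  | cons i ω ih => simp [leftInvSeq, ih, wordProd_cons, List.map_map]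

theorem isLeftDescent_or_of_isLeftDescent_mul {x y : W} {j : B}
    (hj : cs.IsLeftDescent (x * y) j) : cs.IsLeftDescent x j ∨ ℓ (x⁻¹ * s j * x * y) < ℓ y := by
  obtain ⟨e, he, rfl⟩ := cs.exists_isReduced x
  obtain ⟨c, hc, rfl⟩ := cs.exists_isReduced y
  rw [← wordProd_append] at hj
  have hmem := cs.simple_mem_leftInvSeq hj
  rw [leftInvSeq_append] at hmem
  rcases mem_append.mp hmem with h | h
  · exact .inl (cs.isLeftInversion_of_mem_leftInvSeq he h).2
  · obtain ⟨r, hr, hrj⟩ := mem_map.mp h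
    right
    rw [← hrj, MulAut.conj_apply]
    simpa [mul_assoc] using (cs.isLeftInversion_of_mem_leftInvSeq hc hr).2

theorem exists_eraseIdx_of_isLeftDescent {ω : List B} {j : B} (hj : cs.IsLeftDescent (π ω) j) :
    ∃ k < ω.length, s j * π ω = π (ω.eraseIdx k) := by
  obtain ⟨k, hk, hkj⟩ := mem_iff_getElem.mp (cs.simple_mem_leftInvSeq hj)
  refine ⟨k, by simpa using hk, ?_⟩
  rw [← getD_leftInvSeq_mul_wordProd, getD_eq_getElem _ _ hk, hkj]

theorem length_simple_mul_mul_simple_lt {w : W} {a b : B} (ha : cs.IsLeftDescent w a)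
    (hb : cs.IsRightDescent w b) (hne : s a * w * s b ≠ w) : ℓ (s a * w * s b) < ℓ w := by
  obtain ⟨x, rfl⟩ : ∃ x, w = x * s b := ⟨w * s b, by simp⟩
  have hx : s a * (x * s b) * s b = s a * x := by simp [mul_assoc]
  rcases cs.isLeftDescent_or_of_isLeftDescent_mul ha with h | h
  · unfold IsRightDescent at hb
    rw [simple_mul_simple_cancel_right] at hb
    exact hx ▸ h.trans hb
  · rw [length_simple, Nat.lt_one_iff, length_eq_zero_iff] at h
    refine absurd ?_ hne
    calc s a * (x * s b) * s b = x * (x⁻¹ * s a * x * s b) * (s b)⁻¹ := by rw [hx]; group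
      _ = x * s b := by rw [h, mul_one, inv_simple]

theorem exists_isReduced_simple_mul {X : Set B} {ω : List B} (hωX : ∀ i ∈ ω, i ∈ X)
    (hω : cs.IsReduced ω) {j : B} (hj : j ∈ X) :
    ∃ ω' : List B, (∀ i ∈ ω', i ∈ X) ∧ cs.IsReduced ω' ∧ s j * π ω = π ω' := by
  rcases cs.length_simple_mul (π ω) j with hup | hdown
  · refine ⟨j :: ω, by simpa [hj] using hωX, ?_, (wordProd_cons cs j ω).symm⟩
    rw [IsReduced, wordProd_cons, hup, hω.eq, length_cons]
  · obtain ⟨k, hk, hdel⟩ := cs.exists_eraseIdx_of_isLeftDescent (cs.isLeftDescent_iff.mpr hdown)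
    refine ⟨ω.eraseIdx k, fun i hi => hωX i (eraseIdx_subset hi), ?_, hdel⟩
    have := length_eraseIdx_add_one hk
    rw [IsReduced, ← hdel]
    rw [hω.eq] at hdown
    omega

theorem exists_isReduced_of_mem_closure {X : Set B} {u : W}
    (hu : u ∈ Subgroup.closure (cs.simple '' X)) :
    ∃ ω : List B, (∀ i ∈ ω, i ∈ X) ∧ cs.IsReduced ω ∧ u = π ω := by
  induction hu using Subgroup.closure_induction_left with
  | one => exact ⟨[], by simp, by simp [IsReduced], by simp⟩
  | mul_left x hx u _ ih =>
    obtain ⟨j, hj, rfl⟩ := hx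
    obtain ⟨ω, hωX, hω, rfl⟩ := ih
    exact cs.exists_isReduced_simple_mul hωX hω hj
  | inv_mul_cancel x hx u _ ih =>
    obtain ⟨j, hj, rfl⟩ := hx
    obtain ⟨ω, hωX, hω, rfl⟩ := ih
    rw [inv_simple]
    exact cs.exists_isReduced_simple_mul hωX hω hj

theorem finite_closure_of_length_le {X : Set B} (hX : (cs.simple '' X).Finite) (n : ℕ)
    (hn : ∀ u ∈ Subgroup.closure (cs.simple '' X), ℓ u ≤ n) :
    (Subgroup.closure (cs.simple '' X) : Set W).Finite := by
  have := hX.to_subtype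
  refine ((List.finite_length_le (cs.simple '' X) n).image
    fun l => (l.map Subtype.val).prod).subset fun u hu => ?_
  obtain ⟨ω, hωX, hω, rfl⟩ := cs.exists_isReduced_of_mem_closure hu
  have hmem : ∀ t ∈ ω.map cs.simple, t ∈ cs.simple '' X := by
    simpa using fun i hi => ⟨i, hωX i hi, rfl⟩
  lift ω.map cs.simple to List (cs.simple '' X) using hmem with l hl
  refine ⟨l, ?_, show (l.map Subtype.val).prod = _ by rw [hl, wordProd]⟩
  have := congrArg List.length hl
  simp only [length_map] at this
  simpa [this, ← hω.eq] using hn _ hu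

theorem finite_simple_image_setOf_isLeftDescent (w : W) :
    (cs.simple '' {i | cs.IsLeftDescent w i}).Finite := by
  obtain ⟨ω, -, rfl⟩ := cs.exists_isReduced w
  exact (lis ω).finite_toSet.subset fun _ ⟨_, hi, ht⟩ => ht ▸ cs.simple_mem_leftInvSeq hi

theorem length_map_le (f : W →* W) (τ : B → B) (hf : ∀ i, f (s i) = s (τ i)) (u : W) :
    ℓ (f u) ≤ ℓ u := by
  obtain ⟨ω, hω, rfl⟩ := cs.exists_isReduced u
  have : f (π ω) = π (ω.map τ) := by
    simp only [wordProd, map_list_prod, List.map_map]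
    exact congrArg _ (List.map_congr_left fun i _ => hf i)
  rw [this, hω.eq, ← length_map τ]
  exact cs.length_wordProd_le _

theorem length_map_eq (φ : W ≃* W) (τ : Equiv.Perm B) (hφ : ∀ i, φ (s i) = s (τ i)) (u : W) :
    ℓ (φ u) = ℓ u := by
  refine le_antisymm (cs.length_map_le φ.toMonoidHom τ hφ u) ?_
  have hsymm : ∀ i, φ.symm (s i) = s (τ.symm i) := fun i => by
    rw [MulEquiv.symm_apply_eq, hφ, Equiv.apply_symm_apply]
  simpa using cs.length_map_le φ.symm.toMonoidHom τ.symm hsymm (φ u)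

theorem length_add_length_inv_mul_of_mem_closure (φ : W →* W) (hφ : ∀ u, ℓ (φ u) = ℓ u)
    {X : Set B} {w : W} (hX : ∀ i ∈ X, cs.IsLeftDescent w i)
    (hconj : ∀ i ∈ X, w⁻¹ * s i * w = φ (s i)) {u : W}
    (hu : u ∈ Subgroup.closure (cs.simple '' X)) : ℓ u + ℓ (u⁻¹ * w) = ℓ w := by
  have hcomm : ∀ v ∈ Subgroup.closure (cs.simple '' X), w⁻¹ * v * w = φ v :=
    fun v hv => inv_mul_mul_eq_of_mem_closure φ (by rintro _ ⟨i, hi, rfl⟩; exact hconj i hi) hv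
  have step : ∀ v ∈ Subgroup.closure (cs.simple '' X), ∀ j ∈ X, ℓ v + ℓ (v⁻¹ * w) = ℓ w →
      ℓ (v * s j) + ℓ ((v * s j)⁻¹ * w) = ℓ w := by
    intro v hv j hj hvw
    rw [show (v * s j)⁻¹ * w = s j * (v⁻¹ * w) by simp [mul_assoc]]
    have htri : ℓ w ≤ ℓ (v * s j) + ℓ (s j * (v⁻¹ * w)) := by
      simpa [mul_assoc] using cs.length_mul_le (v * s j) (s j * (v⁻¹ * w))
    rcases cs.length_mul_simple v j with hup | hdown
    · have hsplit : v⁻¹ * w * φ v = w := by rw [← hcomm v hv]; group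
      have hdesc := hX j hj
      rw [← hsplit] at hdesc
      rcases cs.isLeftDescent_or_of_isLeftDescent_mul hdesc with h | h
      · rw [isLeftDescent_iff] at h
        omega
      · have hφvj : (v⁻¹ * w)⁻¹ * s j * (v⁻¹ * w) * φ v = φ (v * s j) := by
          rw [← hcomm v hv, ← hcomm _ (mul_mem hv (Subgroup.subset_closure ⟨j, hj, rfl⟩))]
          group
        rw [hφvj, hφ, hφ] at h
        omega
    · rcases cs.length_simple_mul (v⁻¹ * w) j with h | h <;> omega
  induction hu using Subgroup.closure_induction_right with
  | one => simp
  | mul_right v hv _ hs ih =>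
    obtain ⟨j, hj, rfl⟩ := hs
    exact step v hv j hj ih
  | mul_inv_cancel v hv _ hs ih =>
    obtain ⟨j, hj, rfl⟩ := hs
    rw [inv_simple]
    exact step v hv j hj ih

theorem mem_closure_of_length_add_length_inv_mul {X : Set B} {w : W}
    (hadd : ∀ u ∈ Subgroup.closure (cs.simple '' X), ℓ u + ℓ (u⁻¹ * w) = ℓ w)
    (hright : ∀ k, cs.IsRightDescent w k → ∃ i ∈ X, s i * w = w * s k) :
    w ∈ Subgroup.closure (cs.simple '' X) := by
  suffices ∀ u ∈ Subgroup.closure (cs.simple '' X), w ∈ Subgroup.closure (cs.simple '' X) from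
    this 1 (one_mem _)
  intro u hu
  induction hn : ℓ (u⁻¹ * w) using Nat.strong_induction_on generalizing u with
  | _ n ih =>
  by_cases h1 : u⁻¹ * w = 1
  · rwa [inv_mul_eq_one.mp h1] at hu
  obtain ⟨k, hk⟩ := cs.exists_rightDescent_of_ne_one h1
  unfold IsRightDescent at hk
  have hwk : cs.IsRightDescent w k := by
    have := cs.length_mul_le u (u⁻¹ * w * s k)
    have := hadd u hu
    rw [show u * (u⁻¹ * w * s k) = w * s k by group] at *
    unfold IsRightDescent
    omega
  obtain ⟨i, hi, hiw⟩ := hright k hwk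
  refine ih _ (hn ▸ hk) (s i * u) (mul_mem (Subgroup.subset_closure ⟨i, hi, rfl⟩) hu) ?_
  rw [mul_inv_rev, inv_simple, mul_assoc, hiw, ← mul_assoc]

/-- `wX` is the longest element of the finite parabolic subgroup `W_X`, and `τ` is the
opposition involution of `X`. -/
def IsOppositionLongestElement (τ : B → B) (X : Set B) (wX : W) : Prop :=
  wX ∈ Subgroup.closure (cs.simple '' X) ∧ (Subgroup.closure (cs.simple '' X) : Set W).Finite ∧
    (∀ u ∈ Subgroup.closure (cs.simple '' X), ℓ u ≤ ℓ wX) ∧ ∀ i ∈ X, wX * s i * wX = s (τ i)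

section TwistedInvolution

variable {φ : W ≃* W} {τ : Equiv.Perm B} (hφs : ∀ i, φ (cs.simple i) = cs.simple (τ i)) {w : W}
  (hw : φ w = w⁻¹)
include hφs hw

theorem length_mul_simple_perm (k : B) : ℓ (w * s (τ k)) = ℓ (s k * w) :=
  calc ℓ (w * s (τ k)) = ℓ (φ (w⁻¹ * s k)) := by rw [map_mul, map_inv, hw, inv_inv, hφs]
    _ = ℓ (w⁻¹ * s k) := cs.length_map_eq φ τ hφs _
    _ = ℓ (s k * w) := by rw [← length_inv, mul_inv_rev, inv_inv, inv_simple]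

theorem length_simple_perm_mul (k : B) : ℓ (s (τ k) * w) = ℓ (w * s k) :=
  calc ℓ (s (τ k) * w) = ℓ (φ (s k * w⁻¹)) := by rw [map_mul, map_inv, hw, inv_inv, hφs]
    _ = ℓ (s k * w⁻¹) := cs.length_map_eq φ τ hφs _
    _ = ℓ (w * s k) := by rw [← length_inv, mul_inv_rev, inv_inv, inv_simple]

theorem isOppositionLongestElement_of_forall_isLeftDescent (hφ2 : ∀ u, φ (φ u) = u)
    (hfold : ∀ i, cs.IsLeftDescent w i → s i * w * s (τ i) = w) :
    cs.IsOppositionLongestElement τ {i | cs.IsLeftDescent w i} w := by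
  set X := {i | cs.IsLeftDescent w i}
  have hconj : ∀ i ∈ X, w⁻¹ * s i * w = φ (s i) := fun i hi =>
    calc w⁻¹ * s i * w = w⁻¹ * (s i * w * s (τ i)) * s (τ i) := by simp [mul_assoc]
      _ = φ (s i) := by rw [hfold i hi, inv_mul_cancel, one_mul, hφs]
  have hadd : ∀ u ∈ Subgroup.closure (cs.simple '' X), ℓ u + ℓ (u⁻¹ * w) = ℓ w :=
    fun u hu => cs.length_add_length_inv_mul_of_mem_closure φ.toMonoidHom
      (cs.length_map_eq φ τ hφs) (fun i hi => hi) hconj hu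
  have hwX : w ∈ Subgroup.closure (cs.simple '' X) := by
    refine cs.mem_closure_of_length_add_length_inv_mul hadd fun k hk => ⟨τ k, ?_, ?_⟩
    · show ℓ (s (τ k) * w) < ℓ w
      rw [cs.length_simple_perm_mul hφs hw]
      exact hk
    · have hττ : s (τ (τ k)) = s k := by rw [← hφs, ← hφs, hφ2]
      have := hfold (τ k) (by show ℓ (s (τ k) * w) < ℓ w; rwa [cs.length_simple_perm_mul hφs hw])
      rw [hττ] at this
      calc s (τ k) * w = s (τ k) * w * s k * s k := by simp [mul_assoc]
        _ = w * s k := by rw [this]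
  have hinv : w⁻¹ = w := by
    have := inv_mul_mul_eq_of_mem_closure φ.toMonoidHom
      (by rintro _ ⟨i, hi, rfl⟩; exact hconj i hi) hwX
    rwa [inv_mul_cancel, one_mul, MulEquiv.coe_toMonoidHom, hw, eq_comm] at this
  refine ⟨hwX, cs.finite_closure_of_length_le (cs.finite_simple_image_setOf_isLeftDescent w)
    (ℓ w) fun u hu => ?_, fun u hu => ?_, fun i hi => ?_⟩
  · have := hadd u hu
    omega
  · have := hadd u hu
    omega
  · rw [← hφs, ← hconj i hi, hinv]

end TwistedInvolution

end CoxeterSystem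

/-- **Springer's theorem on twisted involutions.**
Let `(W, {sᵢ}_{i ∈ I})` be a Coxeter system, let `φ` be an automorphism of `W` permuting the
simple reflections via a permutation `τ` of `I`, with `φ² = id`, and let `w ∈ W` be a
`τ`-twisted involution, i.e. `φ w = w⁻¹`.  Then there exist `v ∈ W` and a subset `X ⊆ I`
generating a finite parabolic subgroup `W_X` with longest element `w_X` (an element of `W_X`
of maximal length) such that `τ` restricted to `X` is the opposition involution of `X`
(i.e. `w_X sᵢ w_X = s_{τ i}` for all `i ∈ X`) and `w = v * w_X * (φ v)⁻¹`. -/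
theorem springer_twisted_involution
    {I : Type} {W : Type} [Group W] {M : CoxeterMatrix I} (cs : CoxeterSystem M W)
    (φ : W ≃* W) (τ : Equiv.Perm I)
    (hφs : ∀ i, φ (cs.simple i) = cs.simple (τ i))
    (hφ2 : ∀ u, φ (φ u) = u)
    (w : W) (hw : φ w = w⁻¹) :
    ∃ (v : W) (X : Set I) (wX : W),
      wX ∈ Subgroup.closure (cs.simple '' X) ∧
      Set.Finite ((Subgroup.closure (cs.simple '' X) : Subgroup W) : Set W) ∧
      (∀ u ∈ Subgroup.closure (cs.simple '' X), cs.length u ≤ cs.length wX) ∧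
      (∀ i ∈ X, wX * cs.simple i * wX = cs.simple (τ i)) ∧
      w = v * wX * (φ v)⁻¹ := by
  induction hn : cs.length w using Nat.strong_induction_on generalizing w with
  | _ n ih =>
  by_cases hfold : ∀ i, cs.IsLeftDescent w i → cs.simple i * w * cs.simple (τ i) = w
  · obtain ⟨hwX, hfin, hlong, hopp⟩ :=
      cs.isOppositionLongestElement_of_forall_isLeftDescent hφs hw hφ2 hfold
    exact ⟨1, _, w, hwX, hfin, hlong, hopp, by simp⟩
  push Not at hfold
  obtain ⟨i, hi, hne⟩ := hfold
  have hφτ : φ (cs.simple (τ i)) = cs.simple i := by rw [← hφs, hφ2]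
  have hlt : cs.length (cs.simple i * w * cs.simple (τ i)) < n := hn ▸
    cs.length_simple_mul_mul_simple_lt hi
      (by unfold CoxeterSystem.IsRightDescent; rwa [cs.length_mul_simple_perm hφs hw]) hne
  obtain ⟨v, X, wX, hwX, hfin, hlong, hopp, hv⟩ := ih _ hlt (cs.simple i * w * cs.simple (τ i))
    (by rw [map_mul, map_mul, hφs, hφτ, hw]; simp [mul_assoc]) rfl
  refine ⟨cs.simple i * v, X, wX, hwX, hfin, hlong, hopp, ?_⟩
  calc w = cs.simple i * (cs.simple i * w * cs.simple (τ i)) * cs.simple (τ i) := by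
        simp [mul_assoc]
    _ = cs.simple i * v * wX * (φ (cs.simple i * v))⁻¹ := by
        rw [hv, map_mul, hφs, mul_inv_rev, cs.inv_simple]
        group
end

section
/- Let (X,τ) be a compatible decoration: X ⊆ I is of finite type, τ ∈ Aut(A) is involutive, τ(X) = X, and τ|_X equals the opposition involution oi_X. Then the linear maps on the span V of the simple roots satisfy (θ − id) ∘ (τ − id) = 0, where θ = −w_X ∘ τ. Equivalently, θ fixes pointwise the image of τ − id. -/
open scoped BigOperators

namespace KMStmt

variable {I : Type}

/-- The simple root `α i`, as an element of the root lattice realized inside `I → ℚ`. -/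
noncomputable def sr [DecidableEq I] (i : I) : I → ℚ := Pi.single i 1

/-- `A` is a generalized Cartan matrix. -/
def IsGCM [Fintype I] (A : I → I → ℤ) : Prop :=
  (∀ i, A i i = 2) ∧ (∀ i j, i ≠ j → A i j ≤ 0) ∧ (∀ i j, A i j = 0 → A j i = 0)

/-- `s` realizes the simple reflections on the root lattice:
`s i v = v - ⟨v, αᵢ^∨⟩ αᵢ`, where `⟨α j, αᵢ^∨⟩ = A i j`. -/
def IsReflRep [Fintype I] [DecidableEq I] (A : I → I → ℤ)
    (s : I → ((I → ℚ) ≃ₗ[ℚ] (I → ℚ))) : Prop :=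
  ∀ i v, s i v = v - (∑ j, v j * (A i j : ℚ)) • sr i

/-- The Weyl group, as a subgroup of the linear automorphisms of the root space. -/
def Wgrp [Fintype I] [DecidableEq I] (s : I → ((I → ℚ) ≃ₗ[ℚ] (I → ℚ))) :
    Subgroup ((I → ℚ) ≃ₗ[ℚ] (I → ℚ)) := Subgroup.closure (Set.range s)

/-- The (standard) parabolic subgroup `W_X` generated by the reflections `s i`, `i ∈ X`. -/
def Wpara [Fintype I] [DecidableEq I] (s : I → ((I → ℚ) ≃ₗ[ℚ] (I → ℚ))) (X : Set I) :
    Subgroup ((I → ℚ) ≃ₗ[ℚ] (I → ℚ)) := Subgroup.closure (s '' X)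

/-- The nonnegative cone `Q⁺` of the root lattice. -/
def Qplus [Fintype I] : Set (I → ℚ) := {v | ∀ j, ∃ n : ℕ, v j = (n : ℚ)}

/-- The projection `λ ↦ λ̄ = (λ + σ(λ))/2` onto the `σ`-fixed subspace. -/
noncomputable def bar [Fintype I] (σ : (I → ℚ) → (I → ℚ)) (v : I → ℚ) : I → ℚ :=
  (2⁻¹ : ℚ) • (v + σ v)

/-- `σ = w_X ∘ τ` as a map on the root space. -/
def σmap [Fintype I] (wX tV : (I → ℚ) ≃ₗ[ℚ] (I → ℚ)) : (I → ℚ) → (I → ℚ) :=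
  fun v => wX (tV v)

/-- `(X, τ)` is a compatible decoration, with `tV` the action of `τ` on the root space and
`wX` the longest element of the (finite) parabolic subgroup `W_X`:
`τ` is an involutive diagram automorphism of `A` stabilizing `X`, `X` is of finite type,
and `τ|_X` is the opposition involution of `X` (i.e. `w_X (α i) = -α (τ i)` for `i ∈ X`). -/
def IsCompatibleDec [Fintype I] [DecidableEq I] (A : I → I → ℤ)
    (s : I → ((I → ℚ) ≃ₗ[ℚ] (I → ℚ))) (X : Set I) (τ : Equiv.Perm I)
    (tV wX : (I → ℚ) ≃ₗ[ℚ] (I → ℚ)) : Prop :=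
  (∀ i j, A (τ i) (τ j) = A i j) ∧ (∀ i, τ (τ i) = i) ∧ (∀ i ∈ X, τ i ∈ X) ∧
  (∀ i, tV (sr i) = sr (τ i)) ∧
  Finite (Wpara s X) ∧ wX ∈ Wpara s X ∧ wX * wX = 1 ∧
  (∀ i ∈ X, wX (sr i) = - sr (τ i))

/-- `(X, τ)` is a generalized Satake diagram: (it is a compatible decoration and) there is no
`i ∈ I \ X` with `τ i = i` whose connected component in `X ∪ {i}` is of type `A₂`. -/
def IsGSat [Fintype I] (A : I → I → ℤ) (X : Set I) (τ : Equiv.Perm I) : Prop :=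
  ¬ ∃ i, i ∉ X ∧ τ i = i ∧ ∃ j ∈ X, A i j = -1 ∧ A j i = -1 ∧
      ∀ k ∈ X, k ≠ j → A i k = 0 ∧ A j k = 0

/-- `B` is the invariant symmetric bilinear form, with symmetrizers `ε`. -/
def IsInvForm [Fintype I] [DecidableEq I] (A : I → I → ℤ) (ε : I → ℚ)
    (B : (I → ℚ) →ₗ[ℚ] (I → ℚ) →ₗ[ℚ] ℚ)
    (s : I → ((I → ℚ) ≃ₗ[ℚ] (I → ℚ))) : Prop :=
  (∀ i, 0 < ε i) ∧ (∀ u v, B u v = B v u) ∧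
  (∀ i j, B (sr i) (sr j) = ε i * (A i j : ℚ)) ∧
  (∀ i u v, B (s i u) (s i v) = B u v)

/-- `Φ` is the root system: it contains the simple roots, is stable under the simple
reflections and under negation, does not contain `0`, and every root is positive or
negative. -/
def IsRootSystem [Fintype I] [DecidableEq I]
    (s : I → ((I → ℚ) ≃ₗ[ℚ] (I → ℚ))) (Φ : Set (I → ℚ)) : Prop :=
  (∀ i, sr i ∈ Φ) ∧ (0 ∉ Φ) ∧ (∀ v ∈ Φ, v ∈ (Qplus : Set (I → ℚ)) ∨ -v ∈ (Qplus : Set (I → ℚ))) ∧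
  (∀ i, ∀ v ∈ Φ, s i v ∈ Φ) ∧ (∀ v ∈ Φ, -v ∈ Φ)

/-- The orthogonal reflection `s_β : v ↦ v - 2 (β, v)/(β, β) β`, as an endomorphism. -/
noncomputable def reflMap [Fintype I] (B : (I → ℚ) →ₗ[ℚ] (I → ℚ) →ₗ[ℚ] ℚ)
    (β : I → ℚ) : Module.End ℚ (I → ℚ) :=
  LinearMap.id - (B β).smulRight ((2 / B β β) • β)

/-- `Istar` is a set of representatives of the `τ`-orbits on `I \ X`. -/
def IsOrbitReps [Fintype I] [DecidableEq I] (X : Finset I) (τ : Equiv.Perm I)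
    (Istar : Finset I) : Prop :=
  (∀ i ∈ Istar, i ∉ X) ∧ (∀ i, i ∉ X → i ∈ Istar ∨ τ i ∈ Istar) ∧
  (∀ i ∈ Istar, τ i ∈ Istar → τ i = i)

/-- The restricted root system `Φ̄ = { λ̄ : λ ∈ Φ } \ {0}`. -/
noncomputable def restRoots [Fintype I] (σ : (I → ℚ) → (I → ℚ)) (Φ : Set (I → ℚ)) :
    Set (I → ℚ) := {u | u ≠ 0 ∧ ∃ l ∈ Φ, u = bar σ l}


section AuxLemmas

variable {I : Type} [Fintype I] [DecidableEq I]

lemma eq_sum_sr (v : I → ℚ) : v = ∑ i, v i • sr i := by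
  have h : ∀ i, v i • sr i = Pi.single i (v i) := by
    intro i
    ext j
    rcases eq_or_ne j i with rfl | hji
    · simp [sr]
    · simp [sr, Pi.single_eq_of_ne hji]
  simp_rw [h, Finset.univ_sum_single]

lemma mul_apply' (f g : (I → ℚ) ≃ₗ[ℚ] (I → ℚ)) (v : I → ℚ) : (f * g) v = f (g v) := rfl

end AuxLemmas

/-- Let `(X, τ)` be a compatible decoration.  Then the linear maps on the root space satisfy
`(θ − id) ∘ (τ − id) = 0`, where `θ = −w_X ∘ τ`; i.e. `θ` fixes the image of `τ − id`
pointwise. -/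
theorem theta_minus_id_comp_tau_minus_id {I : Type} [Fintype I] [DecidableEq I]
    (A : I → I → ℤ) (hA : IsGCM A)
    (s : I → ((I → ℚ) ≃ₗ[ℚ] (I → ℚ))) (hs : IsReflRep A s)
    (X : Set I) (τ : Equiv.Perm I) (tV wX : (I → ℚ) ≃ₗ[ℚ] (I → ℚ))
    (hcd : IsCompatibleDec A s X τ tV wX) :
    ∀ v : I → ℚ, -(wX (tV (tV v - v))) = tV v - v := by
  obtain ⟨hAinv, hτ2, hτX, htV, hfin, hwXmem, hwX2, hwXsr⟩ := hcd
  -- tV is an involution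
  have htV2 : ∀ v, tV (tV v) = v := by
    intro v
    conv_lhs => rw [eq_sum_sr v]
    rw [map_sum, map_sum]
    simp_rw [map_smul, htV, hτ2]
    exact (eq_sum_sr v).symm
  have htVmul : tV * tV = 1 := LinearEquiv.ext htV2
  -- coordinates of tV v
  have htVapp : ∀ (v : I → ℚ) (k : I), tV v k = v (τ k) := by
    intro v k
    conv_lhs => rw [eq_sum_sr v, map_sum]
    simp_rw [map_smul, htV]
    rw [Finset.sum_apply]
    have : ∀ i, (v i • sr (τ i)) k = if i = τ k then v i else 0 := by
      intro i
      simp only [Pi.smul_apply, sr, Pi.single_apply, smul_eq_mul]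
      split
      · rename_i h; subst h; simp [hτ2]
      · split
        · rename_i h1 h2; exfalso; apply h1; rw [h2, hτ2]
        · simp
    simp_rw [this]
    simp
  -- wX applied twice is the identity
  have hwX2' : ∀ v, wX (wX v) = v := by
    intro v
    have : (wX * wX) v = (1 : (I → ℚ) ≃ₗ[ℚ] (I → ℚ)) v := by rw [hwX2]
    simpa [mul_apply'] using this
  -- conjugation by tV permutes the simple reflections
  have hconj : ∀ j, tV * s j * tV = s (τ j) := by
    intro j
    refine LinearEquiv.ext fun v => ?_
    have h1 : (tV * s j * tV) v = tV (s j (tV v)) := rfl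
    rw [h1, hs j (tV v), map_sub, htV2, map_smul, htV]
    rw [hs (τ j) v]
    congr 2
    calc ∑ k, tV v k * (A j k : ℚ) = ∑ k, v (τ k) * (A j k : ℚ) := by
          simp_rw [htVapp]
      _ = ∑ k, v (τ (τ k)) * (A j (τ k) : ℚ) := by
          exact (Equiv.sum_comp τ (fun k => v (τ k) * (A j k : ℚ))).symm
      _ = ∑ k, v k * (A (τ j) k : ℚ) := by
          refine Finset.sum_congr rfl fun k _ => ?_
          rw [hτ2]
          congr 2
          have := hAinv j (τ k)
          rw [hτ2] at this
          exact_mod_cast this.symm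
  -- the span of the simple roots indexed by X
  set S : Submodule ℚ (I → ℚ) := Submodule.span ℚ (sr '' X) with hS
  -- every element of W_X moves vectors by elements of S
  have hdiff : ∀ w ∈ Wpara s X, ∀ v : I → ℚ, w v - v ∈ S := by
    intro w hw
    refine Subgroup.closure_induction (p := fun w _ => ∀ v : I → ℚ, w v - v ∈ S)
      ?_ ?_ ?_ ?_ hw
    · rintro x ⟨j, hj, rfl⟩ v
      rw [hs j v]
      have : v - (∑ k, v k * (A j k : ℚ)) • sr j - v = -((∑ k, v k * (A j k : ℚ)) • sr j) := by
        abel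
      rw [this]
      exact neg_mem (Submodule.smul_mem _ _ (Submodule.subset_span ⟨j, hj, rfl⟩))
    · intro v; simp
    · intro x y _ _ hx hy v
      have : (x * y) v - v = (x (y v) - y v) + (y v - v) := by
        rw [mul_apply']; abel
      rw [this]
      exact add_mem (hx _) (hy _)
    · intro x _ hx v
      have h := hx (x⁻¹ v)
      have hxx : x (x⁻¹ v) = v := x.apply_symm_apply v
      rw [hxx] at h
      have : x⁻¹ v - v = -(v - x⁻¹ v) := by abel
      rw [this]
      exact neg_mem h
  -- an element of W_X fixing all sr i, i ∈ X, is the identity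
  have hfix : ∀ w ∈ Wpara s X, (∀ i ∈ X, w (sr i) = sr i) → ∀ v : I → ℚ, w v = v := by
    intro w hw hfixsr v
    have hfixS : ∀ d ∈ S, w d = d := by
      intro d hd
      refine Submodule.span_induction (p := fun d _ => w d = d) ?_ ?_ ?_ ?_ hd
      · rintro x ⟨i, hi, rfl⟩; exact hfixsr i hi
      · simp
      · intro x y _ _ hx hy; rw [map_add, hx, hy]
      · intro a x _ hx; rw [map_smul, hx]
    have hp : w v - v ∈ S := hdiff w hw v
    have hwp : w (w v - v) = w v - v := hfixS _ hp
    have hiter : ∀ m : ℕ, (w ^ m) v = v + m • (w v - v) := by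
      intro m
      induction m with
      | zero => simp
      | succ m ih =>
        rw [pow_succ', mul_apply', ih, map_add, map_nsmul, hwp, succ_nsmul]
        abel
    haveI : Finite (Wpara s X) := hfin
    set n : ℕ := orderOf (⟨w, hw⟩ : Wpara s X) with hn
    have hnpos : 0 < n := orderOf_pos _
    have hpow : (⟨w, hw⟩ : Wpara s X) ^ n = 1 := pow_orderOf_eq_one _
    have hpow' : w ^ n = 1 := by
      have := congrArg (Subtype.val) hpow
      simpa using this
    have h1 : (w ^ n) v = v := by rw [hpow']; rfl
    rw [hiter n] at h1
    have hzero : (n : ℚ) • (w v - v) = 0 := by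
      have h2 : n • (w v - v) = 0 := by
        have := h1
        rwa [add_eq_left] at this
      rw [← Nat.cast_smul_eq_nsmul ℚ] at h2
      exact h2
    have : w v - v = 0 := by
      rcases smul_eq_zero.mp hzero with h | h
      · exfalso
        have : (n : ℚ) ≠ 0 := by exact_mod_cast hnpos.ne'
        exact this h
      · exact h
    linear_combination (norm := module) this
  -- tV * wX * tV ∈ W_X
  have hw' : tV * wX * tV ∈ Wpara s X := by
    refine Subgroup.closure_induction (p := fun w _ => tV * w * tV ∈ Wpara s X)
      ?_ ?_ ?_ ?_ hwXmem
    · rintro x ⟨j, hj, rfl⟩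
      rw [hconj j]
      exact Subgroup.subset_closure ⟨τ j, hτX j hj, rfl⟩
    · show tV * 1 * tV ∈ Wpara s X
      rw [mul_one, htVmul]; exact one_mem _
    · intro x y _ _ hx hy
      have : tV * (x * y) * tV = (tV * x * tV) * (tV * y * tV) := by
        rw [show (tV * x * tV) * (tV * y * tV) = tV * x * (tV * tV) * y * tV by group,
          htVmul]
        group
      rw [this]
      exact mul_mem hx hy
    · intro x _ hx
      have : tV * x⁻¹ * tV = (tV * x * tV)⁻¹ := by
        rw [mul_inv_rev, mul_inv_rev]
        have htVinv : tV⁻¹ = tV := by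
          rw [inv_eq_iff_mul_eq_one, htVmul]
        rw [htVinv]
        group
      rw [this]
      exact inv_mem hx
  -- u := (tV * wX * tV) * wX fixes all sr i, i ∈ X, hence is the identity
  have hu : ∀ v : I → ℚ, tV (wX (tV (wX v))) = v := by
    have humem : (tV * wX * tV) * wX ∈ Wpara s X := mul_mem hw' hwXmem
    have hufix : ∀ i ∈ X, ((tV * wX * tV) * wX) (sr i) = sr i := by
      intro i hi
      have h1 : ((tV * wX * tV) * wX) (sr i) = tV (wX (tV (wX (sr i)))) := rfl
      rw [h1, hwXsr i hi, map_neg, htV, hτ2, map_neg, hwXsr i hi, neg_neg, htV, hτ2]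
    intro v
    exact hfix _ humem hufix v
  -- wX and tV commute
  have hcomm : ∀ v, wX (tV v) = tV (wX v) := by
    intro v
    have h1 := hu (wX v)
    rw [hwX2'] at h1
    have h2 := congrArg tV h1
    rw [htV2] at h2
    exact h2
  -- wX negated via tV on S
  have hwXS : ∀ d ∈ S, wX d = -(tV d) := by
    intro d hd
    refine Submodule.span_induction (p := fun d _ => wX d = -(tV d)) ?_ ?_ ?_ ?_ hd
    · rintro x ⟨i, hi, rfl⟩
      rw [hwXsr i hi, htV]
    · simp
    · intro x y _ _ hx hy; rw [map_add, hx, hy, map_add]; abel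
    · intro a x _ hx; rw [map_smul, hx, map_smul]; rw [smul_neg]
  -- key: wX fixes sr (τ k) - sr k for every k
  have hkey : ∀ k, wX (sr (τ k)) - wX (sr k) = sr (τ k) - sr k := by
    intro k
    have hdk : wX (sr k) - sr k ∈ S := hdiff wX hwXmem (sr k)
    have h1 : wX (wX (sr k) - sr k) = -(wX (sr k) - sr k) := by
      rw [map_sub, hwX2']
      abel
    have h2 : wX (wX (sr k) - sr k) = -(tV (wX (sr k) - sr k)) := hwXS _ hdk
    have h3 : tV (wX (sr k) - sr k) = wX (sr k) - sr k := by
      have := h1.symm.trans h2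
      have := neg_injective this
      exact this.symm
    have h4 : wX (sr (τ k)) - sr (τ k) = tV (wX (sr k) - sr k) := by
      rw [map_sub, htV, ← hcomm, htV]
    rw [h3] at h4
    linear_combination (norm := module) h4
  -- conclude via linearity
  have hfinal : ∀ v, wX (tV v) - wX v = tV v - v := by
    intro v
    have hv := eq_sum_sr v
    calc wX (tV v) - wX v = ∑ k, v k • (wX (tV (sr k)) - wX (sr k)) := by
          conv_lhs => rw [hv]
          simp only [map_sum, map_smul, smul_sub]
          rw [← Finset.sum_sub_distrib]
      _ = ∑ k, v k • (tV (sr k) - sr k) := by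
          refine Finset.sum_congr rfl fun k _ => ?_
          rw [htV]
          rw [hkey k]
      _ = tV v - v := by
          conv_rhs => rw [hv]
          simp only [map_sum, map_smul, smul_sub]
          rw [← Finset.sum_sub_distrib]
  intro v
  have h1 : tV (tV v - v) = v - tV v := by rw [map_sub, htV2]
  rw [h1, map_sub]
  have := hfinal v
  linear_combination (norm := module) this

end KMStmt
end

section
/- Let (X,τ) be a compatible decoration and i ∈ I \ X. Writing {κ_j^∨}_{j∈X} for the fundamental coweights of the finite-type root subsystem Φ_X, one has w_X(α_i) = α_i + Σ_{j∈X} v_{ij} α_j where v_{ij} = −(α_i + α_{τ(i)})(κ_j^∨), and each v_{ij} is a nonnegative integer. -/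
open scoped BigOperators

namespace KMStmt

variable {I : Type}

/-- The pairing `⟨λ, h⟩` of an element `v` of the root lattice with the element
`h = ∑ₖ c k hₖ` of the coroot space, using `α m (h k) = A k m`. -/
noncomputable def pairH {I : Type} [Fintype I] (A : I → I → ℤ) (c v : I → ℚ) : ℚ :=
  ∑ k, ∑ m, c k * v m * (A k m : ℚ)

set_option linter.unusedSectionVars false

section Aux
variable [Fintype I] [DecidableEq I] (A : I → I → ℤ) (s : I → ((I → ℚ) ≃ₗ[ℚ] (I → ℚ)))

lemma sr_apply (i k : I) : sr i k = if k = i then 1 else 0 := Pi.single_apply i 1 k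

lemma sum_single (v : I → ℚ) : ∑ l, v l • sr l = v := by
  funext k
  simp [Finset.sum_apply, sr_apply, mul_ite, Finset.sum_ite_eq]

lemma pairH_sr_right (c : I → ℚ) (k : I) :
    pairH A c (sr k) = ∑ l, c l * (A l k : ℚ) := by
  unfold pairH
  refine Finset.sum_congr rfl fun l _ => ?_
  simp [sr_apply, mul_ite, ite_mul, Finset.sum_ite_eq']

lemma pairH_add_right (c v v' : I → ℚ) :
    pairH A c (v + v') = pairH A c v + pairH A c v' := by
  simp [pairH, mul_add, add_mul, Finset.sum_add_distrib]

lemma pairH_neg_right (c v : I → ℚ) : pairH A c (-v) = -pairH A c v := by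
  simp [pairH, Finset.sum_neg_distrib]

lemma pairH_decomp (c v : I → ℚ) :
    pairH A c v = ∑ m, v m * pairH A c (sr m) := by
  simp only [pairH_sr_right, Finset.mul_sum]
  rw [pairH, Finset.sum_comm]
  exact Finset.sum_congr rfl fun m _ => Finset.sum_congr rfl fun l _ => by ring

variable (hA : IsGCM A) (hs : IsReflRep A s)
include hA hs

lemma s_invol (k : I) (v : I → ℚ) : s k (s k v) = v := by
  set c := ∑ j, v j * (A k j : ℚ) with hc
  have h1 : s k v = v - c • sr k := hs k v
  have h2 : ∑ j, (s k v) j * (A k j : ℚ) = -c := by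
    rw [h1]
    simp only [Pi.sub_apply, Pi.smul_apply, smul_eq_mul, sub_mul,
      Finset.sum_sub_distrib, ← hc]
    have : ∑ j, c * sr k j * (A k j : ℚ) = c * 2 := by
      simp [sr_apply, mul_ite, ite_mul, Finset.sum_ite_eq', hA.1 k, mul_comm]
    rw [this]
    ring
  rw [hs k (s k v), h2, h1]
  ext m; simp

lemma s_mul_self (k : I) : s k * s k = 1 :=
  LinearEquiv.ext fun v => s_invol A s hA hs k v

lemma s_inv (k : I) : (s k)⁻¹ = s k :=
  inv_eq_of_mul_eq_one_right (s_mul_self A s hA hs k)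

end Aux

lemma sum_sr_mul [Fintype I] [DecidableEq I] (j : I) (g : I → ℚ) :
    ∑ k, sr j k * g k = g j := by
  simp [sr_apply, ite_mul, Finset.sum_ite_eq']

lemma dual_refl_aux [Fintype I] [DecidableEq I] (A : I → I → ℤ)
    (s : I → ((I → ℚ) ≃ₗ[ℚ] (I → ℚ))) (hs : IsReflRep A s) (j : I) (c v : I → ℚ) :
    pairH A (fun k => c k - (∑ l, c l * (A l j : ℚ)) * sr j k) v = pairH A c (s j v) := by
  have hPc' : ∀ m, (∑ l, (c l - (∑ l', c l' * (A l' j : ℚ)) * sr j l) * (A l m : ℚ))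
      = (∑ l, c l * (A l m : ℚ)) - (∑ l', c l' * (A l' j : ℚ)) * (A j m : ℚ) := by
    intro m
    simp only [sub_mul, Finset.sum_sub_distrib, mul_assoc, ← Finset.mul_sum, sum_sr_mul]
  rw [pairH_decomp, pairH_decomp]
  simp only [pairH_sr_right]
  rw [hs j v]
  simp only [hPc', Pi.sub_apply, Pi.smul_apply, smul_eq_mul]
  simp only [mul_sub, sub_mul, Finset.sum_sub_distrib]
  congr 1
  have h1 : ∑ m, v m * ((∑ l', c l' * (A l' j : ℚ)) * (A j m : ℚ))
      = (∑ l', c l' * (A l' j : ℚ)) * ∑ m, v m * (A j m : ℚ) := by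
    rw [Finset.mul_sum]
    exact Finset.sum_congr rfl fun m _ => by ring
  have h2 : ∑ m, (∑ m', v m' * (A j m' : ℚ)) * sr j m * (∑ l, c l * (A l m : ℚ))
      = (∑ m', v m' * (A j m' : ℚ)) * (∑ l, c l * (A l j : ℚ)) := by
    simp only [mul_assoc, ← Finset.mul_sum, sum_sr_mul]
  rw [h1, h2]
  ring

section Closure
variable [Fintype I] [DecidableEq I] (A : I → I → ℤ) (s : I → ((I → ℚ) ≃ₗ[ℚ] (I → ℚ)))
variable {X : Finset I}

lemma wpara_fix (hs : IsReflRep A s) {w : (I → ℚ) ≃ₗ[ℚ] (I → ℚ)}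
    (hw : w ∈ Wpara s (↑X : Set I)) :
    ∀ (v : I → ℚ) (k), k ∉ X → w v k = v k := by
  induction hw using Subgroup.closure_induction with
  | mem x hx =>
    obtain ⟨j, hj, rfl⟩ := hx
    intro v k hk
    have hkj : k ≠ j := fun h => hk (h ▸ (Finset.mem_coe.mp hj))
    rw [hs j v]
    simp [sr_apply, hkj]
  | one => intro v k _; rfl
  | mul x y hx hy px py =>
    intro v k hk
    have : (x * y) v = x (y v) := rfl
    rw [this, px (y v) k hk, py v k hk]
  | inv x hx px =>
    intro v k hk
    have h1 := px (x⁻¹ v) k hk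
    rw [show x (x⁻¹ v) = v from x.apply_symm_apply v] at h1
    exact h1.symm

/-- vectors with integer coordinates -/
def IntV [Fintype I] (v : I → ℚ) : Prop := ∀ m, ∃ z : ℤ, v m = (z : ℚ)

lemma s_int (hs : IsReflRep A s) (j : I) (v : I → ℚ) (hv : IntV v) : IntV (s j v) := by
  choose zv hzv using hv
  intro m
  refine ⟨zv m - (∑ k, zv k * A j k) * (if m = j then 1 else 0), ?_⟩
  rw [hs j v]
  have hsum : (∑ k, v k * (A j k : ℚ)) = ((∑ k, zv k * A j k : ℤ) : ℚ) := by
    push_cast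
    exact Finset.sum_congr rfl fun k _ => by rw [hzv]
  simp only [Pi.sub_apply, Pi.smul_apply, smul_eq_mul, sr_apply, hsum, hzv m]
  push_cast
  split <;> ring

lemma wpara_int (hA : IsGCM A) (hs : IsReflRep A s) {w : (I → ℚ) ≃ₗ[ℚ] (I → ℚ)}
    (hw : w ∈ Wpara s (↑X : Set I)) :
    ∀ v, IntV v → IntV (w v) := by
  suffices h : (∀ v, IntV v → IntV (w v)) ∧ (∀ v, IntV v → IntV (w⁻¹ v)) from h.1
  induction hw using Subgroup.closure_induction with
  | mem x hx =>
    obtain ⟨j, _, rfl⟩ := hx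
    constructor
    · exact fun v hv => s_int A s hs j v hv
    · rw [s_inv A s hA hs j]
      exact fun v hv => s_int A s hs j v hv
  | one => exact ⟨fun v hv => hv, fun v hv => by simpa using hv⟩
  | mul x y hx hy px py =>
    constructor
    · exact fun v hv => px.1 (y v) (py.1 v hv)
    · intro v hv
      have : (x * y)⁻¹ v = y⁻¹ (x⁻¹ v) := by rw [mul_inv_rev]; rfl
      rw [this]
      exact py.2 (x⁻¹ v) (px.2 v hv)
  | inv x hx px =>
    refine ⟨px.2, ?_⟩
    rw [inv_inv]
    exact px.1

/-- existence of the dual action on coweight coefficient vectors -/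
lemma wpara_dual (hA : IsGCM A) (hs : IsReflRep A s) {w : (I → ℚ) ≃ₗ[ℚ] (I → ℚ)}
    (hw : w ∈ Wpara s (↑X : Set I)) :
    ∃ u : (I → ℚ) → (I → ℚ),
      (∀ c, (∀ k, k ∉ X → c k = 0) → ∀ k, k ∉ X → u c k = 0) ∧
      (∀ c v, pairH A (u c) v = pairH A c (w v)) := by
  suffices h : ∃ u u' : (I → ℚ) → (I → ℚ),
      (∀ c, (∀ k, k ∉ X → c k = 0) → ∀ k, k ∉ X → u c k = 0) ∧
      (∀ c, (∀ k, k ∉ X → c k = 0) → ∀ k, k ∉ X → u' c k = 0) ∧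
      (∀ c v, pairH A (u c) v = pairH A c (w v)) ∧
      (∀ c v, pairH A (u' c) v = pairH A c (w⁻¹ v)) by
    obtain ⟨u, u', h1, _, h3, _⟩ := h
    exact ⟨u, h1, h3⟩
  induction hw using Subgroup.closure_induction with
  | mem x hx =>
    obtain ⟨j, hj, rfl⟩ := hx
    refine ⟨fun c k => c k - (∑ l, c l * (A l j : ℚ)) * sr j k,
            fun c k => c k - (∑ l, c l * (A l j : ℚ)) * sr j k, ?_, ?_, ?_, ?_⟩
    · intro c hc k hk
      have : k ≠ j := fun h => hk (h ▸ Finset.mem_coe.mp hj)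
      simp [hc k hk, sr_apply, this]
    · intro c hc k hk
      have : k ≠ j := fun h => hk (h ▸ Finset.mem_coe.mp hj)
      simp [hc k hk, sr_apply, this]
    · intro c v
      exact dual_refl_aux A s hs j c v
    · intro c v
      rw [s_inv A s hA hs j]
      exact dual_refl_aux A s hs j c v
  | one =>
    exact ⟨id, id, fun c hc => hc, fun c hc => hc,
      fun c v => rfl, fun c v => by rw [inv_one]; rfl⟩
  | mul x y hx hy px py =>
    obtain ⟨ux, ux', hx1, hx2, hx3, hx4⟩ := px
    obtain ⟨uy, uy', hy1, hy2, hy3, hy4⟩ := py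
    refine ⟨fun c => uy (ux c), fun c => ux' (uy' c), ?_, ?_, ?_, ?_⟩
    · intro c hc k hk; exact hy1 _ (hx1 c hc) k hk
    · intro c hc k hk; exact hx2 _ (hy2 c hc) k hk
    · intro c v
      rw [hy3, hx3]; rfl
    · intro c v
      rw [hx4, hy4]
      have : (x * y)⁻¹ v = y⁻¹ (x⁻¹ v) := by rw [mul_inv_rev]; rfl
      rw [this]
  | inv x hx px =>
    obtain ⟨ux, ux', h1, h2, h3, h4⟩ := px
    exact ⟨ux', ux, h2, h1, h4, by simp only [inv_inv]; exact h3⟩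

end Closure

section BForm
variable [Fintype I] [DecidableEq I] (A : I → I → ℤ) (s : I → ((I → ℚ) ≃ₗ[ℚ] (I → ℚ)))
variable (X : Finset I) [Fintype ↥(Wpara s (↑X : Set I))]

/-- the averaged invariant positive definite form -/
noncomputable def Bf : (I → ℚ) →ₗ[ℚ] (I → ℚ) →ₗ[ℚ] ℚ :=
  LinearMap.mk₂ ℚ
    (fun u v => ∑ w : ↥(Wpara s (↑X : Set I)), ∑ m, w.1 u m * w.1 v m)
    (fun u1 u2 v => by
      simp [map_add, Pi.add_apply, add_mul, Finset.sum_add_distrib])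
    (fun c u v => by
      simp [map_smul, Pi.smul_apply, smul_eq_mul, mul_assoc, Finset.mul_sum])
    (fun u v1 v2 => by
      simp [map_add, Pi.add_apply, mul_add, Finset.sum_add_distrib])
    (fun c u v => by
      simp [map_smul, Pi.smul_apply, smul_eq_mul, Finset.mul_sum, mul_left_comm])

lemma Bf_apply (u v : I → ℚ) :
    Bf s X u v = ∑ w : ↥(Wpara s (↑X : Set I)), ∑ m, w.1 u m * w.1 v m := rfl

lemma Bf_symm (u v : I → ℚ) : Bf s X u v = Bf s X v u := by
  simp [Bf_apply, mul_comm]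

lemma Bf_pos (v : I → ℚ) (hv : v ≠ 0) : 0 < Bf s X v v := by
  rw [Bf_apply]
  obtain ⟨m0, hm0⟩ : ∃ m, v m ≠ 0 := by
    by_contra h; push_neg at h; exact hv (funext h)
  refine Finset.sum_pos' (fun w _ => Finset.sum_nonneg fun m _ => mul_self_nonneg _)
    ⟨⟨1, one_mem _⟩, Finset.mem_univ _, ?_⟩
  refine Finset.sum_pos' (fun m _ => mul_self_nonneg _) ⟨m0, Finset.mem_univ _, ?_⟩
  have h1 : ((⟨1, one_mem _⟩ : ↥(Wpara s (↑X : Set I))) : (I → ℚ) ≃ₗ[ℚ] (I → ℚ)) v = v := rfl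
  rw [h1]
  exact mul_self_pos.mpr hm0

lemma Bf_inv (k : I) (hk : s k ∈ Wpara s (↑X : Set I)) (u v : I → ℚ) :
    Bf s X (s k u) (s k v) = Bf s X u v := by
  rw [Bf_apply, Bf_apply]
  exact Fintype.sum_equiv (Equiv.mulRight (⟨s k, hk⟩ : ↥(Wpara s (↑X : Set I))))
    (fun w => ∑ m, w.1 (s k u) m * w.1 (s k v) m)
    (fun w => ∑ m, w.1 u m * w.1 v m) (fun w => rfl)

lemma s_self (hA : IsGCM A) (hs : IsReflRep A s) (k : I) : s k (sr k) = -sr k := by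
  rw [hs k (sr k)]
  have h2 : ∑ j, sr k j * (A k j : ℚ) = 2 := by
    have hAkk : (A k k : ℚ) = 2 := by exact_mod_cast hA.1 k
    simp [sr_apply, ite_mul, Finset.sum_ite_eq', hAkk]
  rw [h2]
  ext m; simp; ring

lemma Bf_refl (hA : IsGCM A) (hs : IsReflRep A s) (k : I) (hk : k ∈ X) (v : I → ℚ) :
    2 * Bf s X (sr k) v = (∑ m, v m * (A k m : ℚ)) * Bf s X (sr k) (sr k) := by
  have hmem : s k ∈ Wpara s (↑X : Set I) :=
    Subgroup.subset_closure ⟨k, Finset.mem_coe.mpr hk, rfl⟩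
  have hinv := Bf_inv s X k hmem (sr k) (s k v)
  rw [s_invol A s hA hs k v, s_self A s hA hs k, hs k v] at hinv
  rw [map_neg, LinearMap.neg_apply, map_sub, map_smul] at hinv
  simp only [smul_eq_mul] at hinv
  linarith [hinv]

lemma Bf_sr (hA : IsGCM A) (hs : IsReflRep A s) (k : I) (hk : k ∈ X) (l : I) :
    Bf s X (sr k) (sr l) = (A k l : ℚ) * (Bf s X (sr k) (sr k) / 2) := by
  have h := Bf_refl A s X hA hs k hk (sr l)
  have h2 : ∑ m, sr l m * (A k m : ℚ) = (A k l : ℚ) := by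
    simp [sr_apply, ite_mul, Finset.sum_ite_eq']
  rw [h2] at h
  linarith

lemma Bf_expand_left (x v : I → ℚ) :
    Bf s X x v = ∑ l, x l * Bf s X (sr l) v := by
  conv_lhs => rw [← sum_single x]
  simp [map_sum, map_smul, LinearMap.sum_apply, LinearMap.smul_apply, smul_eq_mul]

lemma Bf_expand_right (x v : I → ℚ) :
    Bf s X x v = ∑ k, v k * Bf s X x (sr k) := by
  conv_lhs => rw [← sum_single v]
  simp [map_sum, map_smul, smul_eq_mul]

end BForm


/-- Let `(X, τ)` be a compatible decoration and `i ∈ I \ X`.  Writing `κ j` (`j ∈ X`) for the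
fundamental coweights of the finite-type subsystem `Φ_X` (elements of the span of the coroots
`h_k`, `k ∈ X`, recorded by their coefficient vectors, dual to the simple roots of `X`), one
has `w_X (α i) = α i + ∑_{j ∈ X} v_{ij} α j` with `v_{ij} = −⟨α i + α (τ i), κ j⟩`, and each
`v_{ij}` is a nonnegative integer. -/
theorem wX_on_alpha_i_formula {I : Type} [Fintype I] [DecidableEq I]
    (A : I → I → ℤ) (hA : IsGCM A)
    (s : I → ((I → ℚ) ≃ₗ[ℚ] (I → ℚ))) (hs : IsReflRep A s)
    (X : Finset I) (τ : Equiv.Perm I) (tV wX : (I → ℚ) ≃ₗ[ℚ] (I → ℚ))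
    (hcd : IsCompatibleDec A s ↑X τ tV wX)
    (κ : I → (I → ℚ))
    (hκsupp : ∀ j ∈ X, ∀ k, k ∉ X → κ j k = 0)
    (hκdual : ∀ j ∈ X, ∀ k ∈ X, pairH A (κ j) (sr k) = if k = j then 1 else 0)
    (i : I) (hi : i ∉ X) :
    wX (sr i) = sr i + ∑ j ∈ X, (-(pairH A (κ j) (sr i + sr (τ i)))) • sr j ∧
    ∀ j ∈ X, ∃ n : ℕ, -(pairH A (κ j) (sr i + sr (τ i))) = (n : ℚ) := by
  obtain ⟨hAτ, hτ2, hτX', hτV, hfin, hwXmem, hwX2, hwXsr⟩ := hcd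
  have hτX : ∀ k, k ∈ X → τ k ∈ X := fun k hk => by
    have := hτX' k (Finset.mem_coe.mpr hk); exact Finset.mem_coe.mp this
  have hτnX : ∀ k, k ∉ X → τ k ∉ X := fun k hk h => hk (by rw [← hτ2 k]; exact hτX _ h)
  have hτiX : τ i ∉ X := hτnX i hi
  haveI : Finite ↥(Wpara s (↑X : Set I)) := hfin
  haveI : Fintype ↥(Wpara s (↑X : Set I)) := Fintype.ofFinite _
  have hBkk : ∀ k : I, 0 < Bf s X (sr k) (sr k) := by
    intro k
    refine Bf_pos s X (sr k) fun h => ?_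
    have := congrFun h k
    simp [sr_apply] at this
  -- generic pairing computation
  have hpairgen : ∀ d : I → ℚ, (∀ l, l ∉ X → d l = 0) → ∀ k,
      Bf s X (fun l => d l * (2 / Bf s X (sr l) (sr l))) (sr k)
        = ∑ l, d l * (A l k : ℚ) := by
    intro d hd k
    rw [Bf_expand_left]
    refine Finset.sum_congr rfl fun l _ => ?_
    by_cases hl : l ∈ X
    · rw [Bf_sr A s X hA hs l hl k]
      have hne := (hBkk l).ne'
      field_simp
    · simp [hd l hl]
  -- uniqueness lemma
  have huniq : ∀ d : I → ℚ, (∀ k, k ∉ X → d k = 0) →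
      (∀ k ∈ X, ∑ l, d l * (A l k : ℚ) = 0) → ∀ k, d k = 0 := by
    intro d hd0 hdp
    have hy0 : ∀ k, k ∉ X → d k * (2 / Bf s X (sr k) (sr k)) = 0 :=
      fun k hk => by rw [hd0 k hk, zero_mul]
    have hyy : Bf s X (fun l => d l * (2 / Bf s X (sr l) (sr l)))
        (fun l => d l * (2 / Bf s X (sr l) (sr l))) = 0 := by
      rw [Bf_expand_right]
      refine Finset.sum_eq_zero fun k _ => ?_
      by_cases hk : k ∈ X
      · rw [hpairgen d hd0 k, hdp k hk, mul_zero]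
      · rw [hy0 k hk, zero_mul]
    have hyz : (fun l => d l * (2 / Bf s X (sr l) (sr l))) = (0 : I → ℚ) := by
      by_contra h
      exact absurd hyy (ne_of_gt (Bf_pos s X _ h))
    intro k
    have hk0 : d k * (2 / Bf s X (sr k) (sr k)) = 0 := congrFun hyz k
    have h2 : (2 / Bf s X (sr k) (sr k)) ≠ 0 := div_ne_zero two_ne_zero (hBkk k).ne'
    exact (mul_eq_zero.mp hk0).resolve_right h2
  -- nonnegativity of the fundamental coweights
  have hκnn : ∀ j ∈ X, ∀ k, 0 ≤ κ j k := by
    intro j hj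
    set x : I → ℚ := fun l => κ j l * (2 / Bf s X (sr l) (sr l)) with hxdef
    have hx0 : ∀ l, l ∉ X → x l = 0 := fun l hl => by
      rw [hxdef]; simp [hκsupp j hj l hl]
    have hxk : ∀ k ∈ X, Bf s X x (sr k) = if k = j then 1 else 0 := by
      intro k hk
      rw [hxdef, hpairgen (κ j) (hκsupp j hj) k, ← pairH_sr_right, hκdual j hj k hk]
    set p : I → ℚ := fun l => max (x l) 0 with hpdef
    set q : I → ℚ := fun l => max (-x l) 0 with hqdef
    have hq0 : ∀ l, 0 ≤ q l := fun l => le_max_right _ _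
    have hp0 : ∀ l, 0 ≤ p l := fun l => le_max_right _ _
    have hqp0 : ∀ l, q l * p l = 0 := by
      intro l
      rcases le_total 0 (x l) with h | h
      · have : q l = 0 := by rw [hqdef]; simp; linarith
        rw [this, zero_mul]
      · have : p l = 0 := by rw [hpdef]; simp; linarith
        rw [this, mul_zero]
    have hpq : x = p - q := by
      funext l
      rw [hpdef, hqdef]
      simp only [Pi.sub_apply]
      rcases le_total 0 (x l) with h | h
      · rw [max_eq_left h, max_eq_right (by linarith : -x l ≤ 0)]; ring
      · rw [max_eq_right h, max_eq_left (by linarith : 0 ≤ -x l)]; ring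
    have hqsupp : ∀ l, l ∉ X → q l = 0 := fun l hl => by
      rw [hqdef]; simp [hx0 l hl]
    have hpsupp : ∀ l, l ∉ X → p l = 0 := fun l hl => by
      rw [hpdef]; simp [hx0 l hl]
    have hqx : Bf s X x q = q j := by
      rw [Bf_expand_right]
      rw [Finset.sum_eq_single j]
      · rw [hxk j hj]; simp
      · intro b _ hbj
        by_cases hb : b ∈ X
        · rw [hxk b hb]; simp [hbj]
        · rw [hqsupp b hb, zero_mul]
      · intro h; exact absurd (Finset.mem_univ j) h
    have hqp : Bf s X q p ≤ 0 := by
      rw [Bf_expand_left]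
      refine Finset.sum_nonpos fun l _ => ?_
      by_cases hl : l ∈ X
      · rw [Bf_expand_right, Finset.mul_sum]
        refine Finset.sum_nonpos fun k _ => ?_
        by_cases hk : k ∈ X
        · by_cases hlk : l = k
          · subst hlk
            refine le_of_eq ?_
            calc q l * (p l * Bf s X (sr l) (sr l))
                = q l * p l * Bf s X (sr l) (sr l) := by ring
              _ = 0 := by rw [hqp0 l, zero_mul]
          · have hAlk : (A l k : ℚ) ≤ 0 := by exact_mod_cast hA.2.1 l k hlk
            rw [Bf_sr A s X hA hs l hl k]
            have h1 : 0 ≤ q l * p k := mul_nonneg (hq0 l) (hp0 k)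
            have hb : 0 ≤ Bf s X (sr l) (sr l) / 2 := by
              have := hBkk l; linarith
            have h2 : (A l k : ℚ) * (Bf s X (sr l) (sr l) / 2) ≤ 0 :=
              mul_nonpos_iff.mpr (Or.inr ⟨hAlk, hb⟩)
            calc q l * (p k * ((A l k : ℚ) * (Bf s X (sr l) (sr l) / 2)))
                = (q l * p k) * ((A l k : ℚ) * (Bf s X (sr l) (sr l) / 2)) := by ring
              _ ≤ 0 := mul_nonpos_iff.mpr (Or.inl ⟨h1, by linarith⟩)
        · rw [hpsupp k hk, zero_mul, mul_zero]
      · rw [hqsupp l hl, zero_mul]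
    have hqq : Bf s X q q ≤ 0 := by
      have hx' : Bf s X x q = Bf s X p q - Bf s X q q := by
        rw [hpq, map_sub, LinearMap.sub_apply]
      have hsymm : Bf s X p q = Bf s X q p := Bf_symm s X p q
      have := hq0 j
      linarith
    have hqzero : q = 0 := by
      by_contra h
      exact absurd hqq (not_le.mpr (Bf_pos s X q h))
    intro k
    have hxk0 : 0 ≤ x k := by
      have h1 : q k = 0 := congrFun hqzero k
      have h2 : -x k ≤ max (-x k) 0 := le_max_left _ _
      rw [hqdef] at h1
      simp only at h1
      rw [h1] at h2
      linarith
    have hk2 : κ j k = x k * (Bf s X (sr k) (sr k) / 2) := by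
      rw [hxdef]
      have := (hBkk k).ne'
      field_simp
    rw [hk2]
    have := hBkk k
    positivity
  -- support of wX (sr i) off X
  have hm_supp : ∀ k, k ∉ X → wX (sr i) k = sr i k :=
    fun k hk => wpara_fix A s hs hwXmem (sr i) k hk
  -- dual action of wX
  obtain ⟨u, hu_supp, hu_pair⟩ := wpara_dual A s hA hs hwXmem
  -- reindexing along τ
  have hreindex : ∀ (g : I → ℚ) (k : I),
      ∑ l, g (τ l) * (A l k : ℚ) = ∑ l, g l * (A l (τ k) : ℚ) := by
    intro g k
    calc ∑ l, g (τ l) * (A l k : ℚ)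
        = ∑ l, g (τ l) * (A (τ l) (τ k) : ℚ) := by
          refine Finset.sum_congr rfl fun l _ => ?_
          rw [show A (τ l) (τ k) = A l k from hAτ l k]
      _ = ∑ l, g l * (A l (τ k) : ℚ) := Equiv.sum_comp τ (fun l => g l * (A l (τ k) : ℚ))
  -- the key coefficient computation
  have key : ∀ j ∈ X, wX (sr i) j - sr i j = -(pairH A (κ j) (sr i + sr (τ i))) := by
    intro j hj
    have hUκ : ∀ k, u (κ j) k = -(κ j (τ k)) := by
      have hd := huniq (fun k => u (κ j) k + κ j (τ k)) ?_ ?_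
      · intro k
        have := hd k
        linarith
      · intro k hk
        have h1 : u (κ j) k = 0 := hu_supp (κ j) (hκsupp j hj) k hk
        have h2 : κ j (τ k) = 0 := hκsupp j hj (τ k) (hτnX k hk)
        simp [h1, h2]
      · intro k hk
        have hsplit : ∑ l, (u (κ j) l + κ j (τ l)) * (A l k : ℚ)
            = (∑ l, u (κ j) l * (A l k : ℚ)) + ∑ l, κ j (τ l) * (A l k : ℚ) := by
          rw [← Finset.sum_add_distrib]
          exact Finset.sum_congr rfl fun l _ => by ring
        rw [hsplit]
        have hfirst : ∑ l, u (κ j) l * (A l k : ℚ)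
            = -(if τ k = j then 1 else 0) := by
          rw [← pairH_sr_right, hu_pair (κ j) (sr k),
            hwXsr k (Finset.mem_coe.mpr hk), pairH_neg_right,
            hκdual j hj (τ k) (hτX k hk)]
        have hsecond : ∑ l, κ j (τ l) * (A l k : ℚ) = (if τ k = j then 1 else 0) := by
          rw [hreindex (κ j) k, ← pairH_sr_right, hκdual j hj (τ k) (hτX k hk)]
        rw [hfirst, hsecond]
        ring
    have hway1 : pairH A (κ j) (wX (sr i)) = -(∑ l, κ j l * (A l (τ i) : ℚ)) := by
      rw [← hu_pair (κ j) (sr i), pairH_sr_right]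
      calc ∑ l, u (κ j) l * (A l i : ℚ)
          = ∑ l, -(κ j (τ l) * (A l i : ℚ)) := by
            refine Finset.sum_congr rfl fun l _ => ?_
            rw [hUκ l]; ring
        _ = -(∑ l, κ j (τ l) * (A l i : ℚ)) := by rw [Finset.sum_neg_distrib]
        _ = -(∑ l, κ j l * (A l (τ i) : ℚ)) := by rw [hreindex (κ j) i]
    have hway2 : pairH A (κ j) (wX (sr i))
        = pairH A (κ j) (sr i) + (wX (sr i) j - sr i j) := by
      have hdec : wX (sr i) = sr i + fun k => (wX (sr i) k - sr i k) := by
        funext k; simp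
      conv_lhs => rw [hdec]
      rw [pairH_add_right]
      congr 1
      rw [pairH_decomp]
      rw [Finset.sum_eq_single j]
      · rw [hκdual j hj j hj]; simp
      · intro b _ hbj
        by_cases hb : b ∈ X
        · rw [hκdual j hj b hb]; simp [hbj]
        · simp [hm_supp b hb]
      · intro h; exact absurd (Finset.mem_univ j) h
    have hτpair : pairH A (κ j) (sr (τ i)) = ∑ l, κ j l * (A l (τ i) : ℚ) :=
      pairH_sr_right A (κ j) (τ i)
    rw [pairH_add_right]
    rw [hway1] at hway2
    linarith [hway2, hτpair]
  refine ⟨?_, ?_⟩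
  · funext k
    have hsum : (∑ j ∈ X, (-(pairH A (κ j) (sr i + sr (τ i)))) • sr j) k
        = ∑ j ∈ X, (-(pairH A (κ j) (sr i + sr (τ i)))) * (if k = j then 1 else 0) := by
      rw [Finset.sum_apply]
      exact Finset.sum_congr rfl fun j _ => by rw [Pi.smul_apply, smul_eq_mul, sr_apply]
    rw [Pi.add_apply, hsum]
    simp only [mul_ite, mul_one, mul_zero]
    rw [Finset.sum_ite_eq X k (fun j => -(pairH A (κ j) (sr i + sr (τ i))))]
    by_cases hk : k ∈ X
    · rw [if_pos hk, ← key k hk]; ring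
    · rw [if_neg hk, hm_supp k hk]; ring
  · intro j hj
    have hint : IntV (wX (sr i)) := by
      refine wpara_int A s hA hs hwXmem (sr i) fun m => ?_
      refine ⟨if m = i then 1 else 0, ?_⟩
      rw [sr_apply]
      split <;> simp
    obtain ⟨z, hz⟩ := hint j
    have hji : sr i j = 0 := by
      rw [sr_apply, if_neg (fun h => hi (by rw [← h]; exact hj))]
    have hval : -(pairH A (κ j) (sr i + sr (τ i))) = (z : ℚ) := by
      rw [← key j hj, hji, sub_zero, hz]
    have hnn : 0 ≤ -(pairH A (κ j) (sr i + sr (τ i))) := by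
      rw [pairH_add_right, pairH_sr_right, pairH_sr_right]
      have hS : ∀ i' : I, i' ∉ X → ∑ l, κ j l * (A l i' : ℚ) ≤ 0 := by
        intro i' hi'
        refine Finset.sum_nonpos fun l _ => ?_
        by_cases hl : l ∈ X
        · have hne : l ≠ i' := fun h => hi' (h ▸ hl)
          have hA' : (A l i' : ℚ) ≤ 0 := by exact_mod_cast hA.2.1 l i' hne
          nlinarith [hκnn j hj l]
        · simp [hκsupp j hj l hl]
      have h1 := hS i hi
      have h2 := hS (τ i) hτiX
      linarith
    have hz0 : 0 ≤ z := by
      have : (0 : ℚ) ≤ (z : ℚ) := hval ▸ hnn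
      exact_mod_cast this
    refine ⟨z.toNat, ?_⟩
    rw [hval]
    exact_mod_cast (Int.toNat_of_nonneg hz0).symm

end KMStmt
end

section
/- Let (X,τ) be a compatible decoration and let σ = w_X ∘ τ (an involutive isometry of V = ℚ-span of the simple roots). Then the σ-fixed subspace satisfies V^σ = V^{w_X} ∩ V^τ. -/
open scoped BigOperators

namespace KMStmt

variable {I : Type}

/-- Let `(X, τ)` be a compatible decoration and `σ = w_X ∘ τ` the corresponding involutive
isometry of the root space.  Then the `σ`-fixed subspace satisfies
`V^σ = V^{w_X} ∩ V^τ`. -/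
theorem fixed_space_eq_inter {I : Type} [Fintype I] [DecidableEq I]
    (A : I → I → ℤ) (hA : IsGCM A)
    (s : I → ((I → ℚ) ≃ₗ[ℚ] (I → ℚ))) (hs : IsReflRep A s)
    (X : Set I) (τ : Equiv.Perm I) (tV wX : (I → ℚ) ≃ₗ[ℚ] (I → ℚ))
    (hcd : IsCompatibleDec A s X τ tV wX) :
    {v : I → ℚ | σmap wX tV v = v} = {v | wX v = v} ∩ {v | tV v = v} := by
  obtain ⟨hAτ, hτ2, hXτ, htV, hfin, hwXmem, hwX2, hwXsr⟩ := hcd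
  -- every vector is the sum of its coordinates times simple roots
  have hbasis : ∀ v : I → ℚ, v = ∑ i, v i • sr i := by
    intro v
    ext j
    rw [Finset.sum_apply]
    simp only [sr, Pi.smul_apply, Pi.single_apply, smul_eq_mul]
    rw [Finset.sum_eq_single j]
    · simp
    · intro b _ hb; simp [Ne.symm hb]
    · intro h; exact absurd (Finset.mem_univ j) h
  -- explicit formula for tV
  have htVv : ∀ (v : I → ℚ) (j : I), tV v j = v (τ j) := by
    intro v j
    conv_lhs => rw [hbasis v]
    rw [map_sum]
    simp_rw [map_smul, htV]
    rw [Finset.sum_apply]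
    simp only [sr, Pi.smul_apply, Pi.single_apply, smul_eq_mul]
    rw [Finset.sum_eq_single (τ j)]
    · simp [hτ2]
    · intro b _ hb
      have : ¬ (j = τ b) := by
        intro h; apply hb; rw [h, hτ2]
      simp [this]
    · intro h; exact absurd (Finset.mem_univ _) h
  -- parabolic elements fix coordinates outside X
  have hpara : ∀ w ∈ Wpara s X, ∀ (v : I → ℚ) (j : I), j ∉ X → w v j = v j := by
    intro w hw
    refine Subgroup.closure_induction ?_ ?_ ?_ ?_ hw
    · rintro x ⟨i, hiX, rfl⟩ v j hj
      rw [hs i v]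
      have : j ≠ i := fun h => hj (h ▸ hiX)
      simp [sr, Pi.single_apply, this]
    · intro v j hj; rfl
    · intro x y hx hy ihx ihy v j hj
      have : (x * y) v = x (y v) := rfl
      rw [this, ihx _ _ hj, ihy _ _ hj]
    · intro x hx ihx v j hj
      have h1 : x (x⁻¹ v) j = x⁻¹ v j := ihx (x⁻¹ v) j hj
      have h2 : x (x⁻¹ v) = v := x.apply_symm_apply v
      rw [h2] at h1
      exact h1.symm
  -- formula for wX on vectors supported in X
  have hwXsupp : ∀ v : I → ℚ, (∀ j, j ∉ X → v j = 0) →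
      ∀ j, wX v j = - v (τ j) := by
    intro v hsupp j
    conv_lhs => rw [hbasis v]
    rw [map_sum, Finset.sum_apply]
    simp only [map_smul, Pi.smul_apply, smul_eq_mul]
    have key : ∀ i ∈ Finset.univ, v i * wX (sr i) j = v i * (-(sr (τ i) j)) := by
      intro i _
      by_cases hi : i ∈ X
      · rw [hwXsr i hi]; simp
      · simp [hsupp i hi]
    rw [Finset.sum_congr rfl key]
    simp only [sr, Pi.single_apply, mul_neg]
    rw [Finset.sum_eq_single (τ j)]
    · simp [hτ2]
    · intro b _ hb
      have : ¬ (j = τ b) := by intro h; apply hb; rw [h, hτ2]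
      simp [this]
    · intro h; exact absurd (Finset.mem_univ _) h
  ext v
  simp only [Set.mem_setOf_eq, Set.mem_inter_iff, σmap]
  constructor
  · intro h
    -- apply wX to both sides: tV v = wX v
    have h2 : tV v = wX v := by
      have := congrArg wX h
      have hsq : ∀ u : I → ℚ, wX (wX u) = u := by
        intro u
        have : (wX * wX) u = (1 : (I → ℚ) ≃ₗ[ℚ] (I → ℚ)) u := by rw [hwX2]
        simpa using this
      rw [hsq] at this
      rw [this]
    set d : I → ℚ := tV v - v with hd
    -- d is supported in X
    have hdsupp : ∀ j, j ∉ X → d j = 0 := by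
      intro j hj
      have : wX (tV v) j = tV v j := hpara wX hwXmem (tV v) j hj
      rw [h] at this
      simp [hd, ← this]
    -- d (τ j) = - d j
    have hdτ : ∀ j, d (τ j) = - d j := by
      intro j
      have h1 : tV v (τ j) = v j := by rw [htVv, hτ2]
      simp only [hd, Pi.sub_apply, h1, htVv v j]
      ring
    -- wX d = d  (via the support formula)
    have hwXd : ∀ j, wX d j = d j := by
      intro j
      rw [hwXsupp d hdsupp j, hdτ j, neg_neg]
    -- but also wX d = -d
    have hwXd2 : ∀ j, wX d j = - d j := by
      intro j
      have heq : wX d = wX (tV v) - wX v := by rw [hd, map_sub]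
      rw [heq]
      simp only [Pi.sub_apply, h, ← h2, hd]
      ring
    have hd0 : d = 0 := by
      ext j
      have h3 : d j = - d j := (hwXd j).symm.trans (hwXd2 j)
      have h4 : d j = 0 := by linarith
      simpa using h4
    have htvv : tV v = v := by
      have h5 : tV v - v = 0 := hd0
      exact sub_eq_zero.mp h5
    exact ⟨by rw [← h2, htvv], htvv⟩
  · rintro ⟨hw, ht⟩
    rw [ht, hw]

end KMStmt
end

section
/- Let (X,τ) be a compatible decoration, σ = w_X ∘ τ, and for λ ∈ V write λ̄ = (λ + σ(λ))/2. Then the fixed space V^σ equals the ℚ-span of {α̅_i : i ∈ I}, which also equals the ℚ-span of {λ̄ : λ ∈ Φ, λ̄ ≠ 0}. Moreover every element of the restricted root system Φ̄⁺ = {λ̄ : λ ∈ Φ⁺} \ {0} lies in the ℤ≥0-span of {α̅_i : i in a set of τ-orbit representatives outside X}. -/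
open scoped BigOperators

namespace KMStmt

variable {I : Type}

section Aux
variable {I : Type} [Fintype I] [DecidableEq I]

lemma sr_decomp (v : I → ℚ) : v = ∑ j, v j • sr j := by
  ext k
  simp [sr, Pi.single_apply, Finset.sum_apply, mul_comm]

lemma ext_on_sr {f g : (I → ℚ) →ₗ[ℚ] (I → ℚ)}
    (h : ∀ i, f (sr i) = g (sr i)) : f = g := by
  apply (Pi.basisFun ℚ I).ext
  intro i
  simpa [sr, Pi.basisFun_apply] using h i

lemma spanX_vanish {X : Set I} {v : I → ℚ}
    (hv : v ∈ Submodule.span ℚ (sr '' X)) {j : I} (hj : j ∉ X) : v j = 0 := by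
  induction hv using Submodule.span_induction with
  | mem x hx =>
    obtain ⟨i, hi, rfl⟩ := hx
    have : i ≠ j := fun h => hj (h ▸ hi)
    simp [sr, Pi.single_apply, this]
  | zero => simp
  | add x y _ _ hx hy => simp [hx, hy]
  | smul a x _ hx => simp [hx]

lemma wpara_diff {A : I → I → ℤ}
    {s : I → ((I → ℚ) ≃ₗ[ℚ] (I → ℚ))} (hs : IsReflRep A s) {X : Set I}
    {g : (I → ℚ) ≃ₗ[ℚ] (I → ℚ)} (hg : g ∈ Wpara s X) (v : I → ℚ) :
    g v - v ∈ Submodule.span ℚ (sr '' X) := by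
  induction hg using Subgroup.closure_induction generalizing v with
  | mem x hx =>
    obtain ⟨i, hi, rfl⟩ := hx
    rw [hs i v]
    have : v - (∑ j, v j * (A i j : ℚ)) • sr i - v = -((∑ j, v j * (A i j : ℚ)) • sr i) := by
      abel
    rw [this]
    exact neg_mem (Submodule.smul_mem _ _ (Submodule.subset_span ⟨i, hi, rfl⟩))
  | one => simp
  | mul x y _ _ hx hy =>
    have : (x * y) v - v = (x (y v) - y v) + (y v - v) := by
      show x (y v) - v = _; abel
    rw [this]
    exact add_mem (hx _) (hy _)
  | inv x _ hx =>
    have h2 := hx (x⁻¹ v)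
    have : x (x⁻¹ v) = v := x.apply_symm_apply v
    rw [this] at h2
    have h3 : x⁻¹ v - v = -(v - x⁻¹ v) := by abel
    rw [h3]
    exact neg_mem h2

lemma wpara_fix_spanX {g : (I → ℚ) ≃ₗ[ℚ] (I → ℚ)} {X : Set I}
    (hfix : ∀ i ∈ X, g (sr i) = sr i) {v : I → ℚ}
    (hv : v ∈ Submodule.span ℚ (sr '' X)) : g v = v := by
  induction hv using Submodule.span_induction with
  | mem x hx => obtain ⟨i, hi, rfl⟩ := hx; exact hfix i hi
  | zero => simp
  | add x y _ _ hx hy => simp [map_add, hx, hy]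
  | smul a x _ hx => simp [map_smul, hx]

variable {τ : Equiv.Perm I} {tV wX : (I → ℚ) ≃ₗ[ℚ] (I → ℚ)}

lemma tV_apply (htV : ∀ i, tV (sr i) = sr (τ i)) (hτ2 : ∀ i, τ (τ i) = i) (v : I → ℚ) (j : I) :
    tV v j = v (τ j) := by
  have h1 : tV v = ∑ k, v k • sr (τ k) := by
    conv_lhs => rw [sr_decomp v, map_sum]
    simp [htV]
  rw [h1]
  have h2 : ∀ k, (v k • sr (τ k)) j = if k = τ j then v k else 0 := by
    intro k
    by_cases hk : k = τ j
    · subst hk; simp [sr, Pi.single_apply, hτ2]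
    · have : τ k ≠ j := fun h => hk (by rw [← h, hτ2])
      simp [sr, Pi.single_apply, this, hk]
  simp [Finset.sum_apply, h2]

lemma tV_invol (htV : ∀ i, tV (sr i) = sr (τ i)) (hτ2 : ∀ i, τ (τ i) = i) (v : I → ℚ) :
    tV (tV v) = v := by
  ext j
  rw [tV_apply htV hτ2, tV_apply htV hτ2, hτ2]

lemma tV_sq (htV : ∀ i, tV (sr i) = sr (τ i)) (hτ2 : ∀ i, τ (τ i) = i) :
    tV * tV = 1 := by
  apply LinearEquiv.toLinearMap_injective
  apply LinearMap.ext
  intro v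
  exact tV_invol htV hτ2 v

lemma conj_s {A : I → I → ℤ} {s : I → ((I → ℚ) ≃ₗ[ℚ] (I → ℚ))} (hs : IsReflRep A s)
    (htV : ∀ i, tV (sr i) = sr (τ i)) (hτ2 : ∀ i, τ (τ i) = i)
    (hA1 : ∀ i j, A (τ i) (τ j) = A i j) (i : I) :
    tV * s i * tV = s (τ i) := by
  apply LinearEquiv.toLinearMap_injective
  apply LinearMap.ext
  intro v
  show tV (s i (tV v)) = s (τ i) v
  rw [hs i (tV v), hs (τ i) v, map_sub, tV_invol htV hτ2, map_smul, htV]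
  congr 2
  have h3 : ∀ j, tV v j * (A i j : ℚ) = v (τ j) * ((A (τ i) (τ j) : ℤ) : ℚ) := fun j => by
    rw [tV_apply htV hτ2, hA1]
  simp_rw [h3]
  exact Fintype.sum_equiv τ _ _ (fun j => rfl)

lemma conj_mem {A : I → I → ℤ} {s : I → ((I → ℚ) ≃ₗ[ℚ] (I → ℚ))} {X : Set I}
    (hs : IsReflRep A s) (htV : ∀ i, tV (sr i) = sr (τ i))
    (hτ2 : ∀ i, τ (τ i) = i) (hA1 : ∀ i j, A (τ i) (τ j) = A i j) (hτX : ∀ i ∈ X, τ i ∈ X)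
    {g : (I → ℚ) ≃ₗ[ℚ] (I → ℚ)} (hg : g ∈ Wpara s X) : tV * g * tV ∈ Wpara s X := by
  have htv2 : tV * tV = 1 := tV_sq htV hτ2
  have hcancel : ∀ a : (I → ℚ) ≃ₗ[ℚ] (I → ℚ), tV * (tV * a) = a := fun a => by
    rw [← mul_assoc, htv2, one_mul]
  have htVinv : tV⁻¹ = tV := by
    rw [inv_eq_iff_mul_eq_one, htv2]
  induction hg using Subgroup.closure_induction with
  | mem x hx =>
    obtain ⟨i, hi, rfl⟩ := hx
    rw [conj_s hs htV hτ2 hA1 i]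
    exact Subgroup.subset_closure ⟨τ i, hτX i hi, rfl⟩
  | one => rw [mul_one, htv2]; exact one_mem _
  | mul x y _ _ hx hy =>
    have : tV * (x * y) * tV = (tV * x * tV) * (tV * y * tV) := by
      simp only [mul_assoc, hcancel]
    rw [this]; exact mul_mem hx hy
  | inv x _ hx =>
    have : tV * x⁻¹ * tV = (tV * x * tV)⁻¹ := by
      simp [mul_inv_rev, htVinv, mul_assoc]
    rw [this]; exact inv_mem hx

lemma sigma_invol {A : I → I → ℤ} {s : I → ((I → ℚ) ≃ₗ[ℚ] (I → ℚ))} {X : Set I}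
    (hs : IsReflRep A s) (htV : ∀ i, tV (sr i) = sr (τ i))
    (hτ2 : ∀ i, τ (τ i) = i) (hA1 : ∀ i j, A (τ i) (τ j) = A i j) (hτX : ∀ i ∈ X, τ i ∈ X)
    (hfin : Finite (Wpara s X)) (hwm : wX ∈ Wpara s X)
    (hwsr : ∀ i ∈ X, wX (sr i) = - sr (τ i)) (v : I → ℚ) :
    wX (tV (wX (tV v))) = v := by
  set u : (I → ℚ) ≃ₗ[ℚ] (I → ℚ) := tV * wX * tV with hu
  have hum : u ∈ Wpara s X := conj_mem hs htV hτ2 hA1 hτX hwm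
  set w : (I → ℚ) ≃ₗ[ℚ] (I → ℚ) := u * wX with hwdef
  have hwm' : w ∈ Wpara s X := mul_mem hum hwm
  have hfix : ∀ i ∈ X, w (sr i) = sr i := by
    intro i hi
    have h1 : w (sr i) = tV (wX (tV (wX (sr i)))) := rfl
    rw [h1, hwsr i hi, map_neg tV, htV, hτ2, map_neg wX, hwsr i hi, neg_neg, htV, hτ2]
  have hNfix : ∀ v, w (w v - v) = w v - v := fun v =>
    wpara_fix_spanX hfix (wpara_diff hs hwm' v)
  have hpow : ∀ (k : ℕ) (v : I → ℚ), (w ^ k) v = v + (k : ℚ) • (w v - v) := by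
    intro k
    induction k with
    | zero => intro v; simp
    | succ k ih =>
      intro v
      have h1 : (w ^ (k+1)) v = (w ^ k) (w v) := by
        rw [pow_succ]; rfl
      rw [h1, ih (w v)]
      have h2 : w (w v) = w v + (w v - v) := by
        rw [← hNfix v, map_sub]; abel
      rw [h2]
      push_cast
      module
  obtain ⟨n, hn, hwn⟩ : ∃ n, 0 < n ∧ w ^ n = 1 := by
    have : IsOfFinOrder (⟨w, hwm'⟩ : Wpara s X) := isOfFinOrder_of_finite _
    obtain ⟨n, hn, h1⟩ := isOfFinOrder_iff_pow_eq_one.mp this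
    refine ⟨n, hn, ?_⟩
    have := congrArg (Subtype.val) h1
    rw [SubmonoidClass.coe_pow] at this
    exact this
  have hw1 : ∀ v, w v = v := by
    intro v
    have h0 : (w ^ n) v = v := by rw [hwn]; rfl
    rw [hpow n v] at h0
    have h4 : (n : ℚ) • (w v - v) = 0 := add_eq_left.mp h0
    have h5 : (n : ℚ) ≠ 0 := by positivity
    rcases smul_eq_zero.mp h4 with h | h
    · exact absurd h h5
    · exact sub_eq_zero.mp h
  have h' : tV (wX (tV (wX (tV v)))) = tV v := hw1 (tV v)
  have h2 := congrArg (fun x => tV x) h'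
  rw [tV_invol htV hτ2, tV_invol htV hτ2] at h2
  exact h2

/-- `bar` as a linear map. -/
noncomputable def barL (wX tV : (I → ℚ) ≃ₗ[ℚ] (I → ℚ)) : (I → ℚ) →ₗ[ℚ] (I → ℚ) :=
  (2⁻¹ : ℚ) • (LinearMap.id + wX.toLinearMap ∘ₗ tV.toLinearMap)

lemma bar_eq_barL (wX tV : (I → ℚ) ≃ₗ[ℚ] (I → ℚ)) (v : I → ℚ) :
    bar (σmap wX tV) v = barL wX tV v := by
  simp [bar, σmap, barL]

lemma sigma_bar (hσ2 : ∀ v, σmap wX tV (σmap wX tV v) = v) (v : I → ℚ) :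
    σmap wX tV (bar (σmap wX tV) v) = bar (σmap wX tV) v := by
  show wX (tV ((2⁻¹ : ℚ) • (v + wX (tV v)))) = (2⁻¹ : ℚ) • (v + wX (tV v))
  rw [map_smul, map_smul, map_add, map_add]
  rw [show wX (tV (wX (tV v))) = v from hσ2 v, add_comm]

lemma bar_sigma (hσ2 : ∀ v, σmap wX tV (σmap wX tV v) = v) (v : I → ℚ) :
    bar (σmap wX tV) (σmap wX tV v) = bar (σmap wX tV) v := by
  show (2⁻¹ : ℚ) • (wX (tV v) + wX (tV (wX (tV v)))) = (2⁻¹ : ℚ) • (v + wX (tV v))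
  rw [show wX (tV (wX (tV v))) = v from hσ2 v, add_comm]

lemma bar_sr_X {X : Set I} (htV : ∀ i, tV (sr i) = sr (τ i)) (hτ2 : ∀ i, τ (τ i) = i)
    (hτX : ∀ i ∈ X, τ i ∈ X) (hwsr : ∀ i ∈ X, wX (sr i) = - sr (τ i))
    {j : I} (hj : j ∈ X) : bar (σmap wX tV) (sr j) = 0 := by
  show (2⁻¹ : ℚ) • (sr j + wX (tV (sr j))) = 0
  rw [htV, hwsr (τ j) (hτX j hj), hτ2]
  simp

lemma bar_spanX {X : Set I} (htV : ∀ i, tV (sr i) = sr (τ i)) (hτ2 : ∀ i, τ (τ i) = i)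
    (hτX : ∀ i ∈ X, τ i ∈ X) (hwsr : ∀ i ∈ X, wX (sr i) = - sr (τ i))
    {x : I → ℚ} (hx : x ∈ Submodule.span ℚ (sr '' X)) : bar (σmap wX tV) x = 0 := by
  induction hx using Submodule.span_induction with
  | mem y hy =>
    obtain ⟨i, hi, rfl⟩ := hy
    exact bar_sr_X htV hτ2 hτX hwsr hi
  | zero => rw [bar_eq_barL, map_zero]
  | add x y _ _ hx hy =>
    rw [bar_eq_barL, map_add, ← bar_eq_barL, ← bar_eq_barL, hx, hy, add_zero]
  | smul a x _ hx =>
    rw [bar_eq_barL, map_smul, ← bar_eq_barL, hx, smul_zero]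

lemma bar_tau {A : I → I → ℤ} {s : I → ((I → ℚ) ≃ₗ[ℚ] (I → ℚ))} {X : Set I}
    (hs : IsReflRep A s) (hwm : wX ∈ Wpara s X)
    (htV : ∀ i, tV (sr i) = sr (τ i)) (hτ2 : ∀ i, τ (τ i) = i)
    (hτX : ∀ i ∈ X, τ i ∈ X) (hwsr : ∀ i ∈ X, wX (sr i) = - sr (τ i))
    (hσ2 : ∀ v, σmap wX tV (σmap wX tV v) = v) (j : I) :
    bar (σmap wX tV) (sr (τ j)) = bar (σmap wX tV) (sr j) := by
  have hd : wX (sr (τ j)) - sr (τ j) ∈ Submodule.span ℚ (sr '' X) := wpara_diff hs hwm _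
  have hds : σmap wX tV (sr j) = sr (τ j) + (wX (sr (τ j)) - sr (τ j)) := by
    show wX (tV (sr j)) = _
    rw [htV]
    abel
  have h1 : bar (σmap wX tV) (σmap wX tV (sr j)) =
      bar (σmap wX tV) (sr (τ j)) + bar (σmap wX tV) (wX (sr (τ j)) - sr (τ j)) := by
    rw [hds, bar_eq_barL, map_add, ← bar_eq_barL, ← bar_eq_barL]
  rw [bar_sigma hσ2, bar_spanX htV hτ2 hτX hwsr hd, add_zero] at h1
  exact h1.symm

lemma bar_sr_ne {A : I → I → ℤ} {s : I → ((I → ℚ) ≃ₗ[ℚ] (I → ℚ))} {X : Set I}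
    (hs : IsReflRep A s) (hwm : wX ∈ Wpara s X)
    (htV : ∀ i, tV (sr i) = sr (τ i))
    {i : I} (hi : i ∉ X) : bar (σmap wX tV) (sr i) ≠ 0 := by
  have hd : wX (sr (τ i)) - sr (τ i) ∈ Submodule.span ℚ (sr '' X) := wpara_diff hs hwm _
  have hdi : wX (sr (τ i)) i - sr (τ i) i = 0 := by
    have := spanX_vanish hd hi
    simpa using this
  intro hcon
  have h0 : bar (σmap wX tV) (sr i) i = 0 := by rw [hcon]; rfl
  have h1 : bar (σmap wX tV) (sr i) i = 2⁻¹ * (sr i i + wX (sr (τ i)) i) := by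
    show (2⁻¹ : ℚ) * ((sr i + wX (tV (sr i))) i) = _
    rw [htV]
    rfl
  have h2 : sr i i = (1 : ℚ) := by simp [sr]
  have h3 : wX (sr (τ i)) i = sr (τ i) i := by linarith
  have h4 : (0 : ℚ) ≤ sr (τ i) i := by
    by_cases h : τ i = i <;> simp [sr, Pi.single_apply, h]
  rw [h1, h2, h3] at h0
  linarith

end Aux

/-- Let `(X, τ)` be a compatible decoration, `σ = w_X ∘ τ`, and `λ̄ = (λ + σ λ)/2`.
Then `V^σ = Span_ℚ {ᾱᵢ : i ∈ I} = Span_ℚ (Φ̄)`, and every element of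
`Φ̄⁺ = {λ̄ : λ ∈ Φ⁺} \ {0}` lies in the `ℤ_{≥0}`-span of the simple restricted roots
`ᾱᵢ`, `i ∈ I*` (a set of `τ`-orbit representatives outside `X`). -/
theorem fixed_space_spanned_by_restricted_roots {I : Type} [Fintype I] [DecidableEq I]
    (A : I → I → ℤ) (hA : IsGCM A)
    (s : I → ((I → ℚ) ≃ₗ[ℚ] (I → ℚ))) (hs : IsReflRep A s)
    (X : Finset I) (τ : Equiv.Perm I) (tV wX : (I → ℚ) ≃ₗ[ℚ] (I → ℚ))
    (hcd : IsCompatibleDec A s ↑X τ tV wX)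
    (Φ : Set (I → ℚ)) (hΦ : IsRootSystem s Φ)
    (Istar : Finset I) (hIstar : IsOrbitReps X τ Istar) :
    {v : I → ℚ | σmap wX tV v = v} =
      ↑(Submodule.span ℚ (Set.range fun i => bar (σmap wX tV) (sr i))) ∧
    {v : I → ℚ | σmap wX tV v = v} =
      ↑(Submodule.span ℚ (restRoots (σmap wX tV) Φ)) ∧
    (∀ l ∈ Φ, l ∈ (Qplus : Set (I → ℚ)) → bar (σmap wX tV) l ≠ 0 →
      ∃ c : I → ℕ, bar (σmap wX tV) l = ∑ i ∈ Istar, (c i : ℚ) • bar (σmap wX tV) (sr i)) := by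
  obtain ⟨hA1, hτ2, hτX, htV, hfin, hwm, hw2, hwsr⟩ := hcd
  obtain ⟨hIX, hIcov, hIfix⟩ := hIstar
  have hσ2 : ∀ v, σmap wX tV (σmap wX tV v) = v := fun v =>
    sigma_invol hs htV hτ2 hA1 hτX hfin hwm hwsr v
  -- Part 1
  have key1 : {v : I → ℚ | σmap wX tV v = v} =
      ↑(Submodule.span ℚ (Set.range fun i => bar (σmap wX tV) (sr i))) := by
    apply Set.Subset.antisymm
    · intro v hv
      have hv' : wX (tV v) = v := hv
      have hbv : bar (σmap wX tV) v = v := by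
        show (2⁻¹ : ℚ) • (v + wX (tV v)) = v
        rw [hv']
        module
      have h2 : bar (σmap wX tV) v = ∑ j, v j • bar (σmap wX tV) (sr j) := by
        rw [bar_eq_barL]
        conv_lhs => rw [sr_decomp v, map_sum]
        refine Finset.sum_congr rfl fun j _ => ?_
        rw [map_smul, ← bar_eq_barL]
      rw [← hbv, h2]
      exact Submodule.sum_mem _ fun j _ =>
        Submodule.smul_mem _ _ (Submodule.subset_span ⟨j, rfl⟩)
    · intro v hv
      rw [SetLike.mem_coe] at hv
      show σmap wX tV v = v
      induction hv using Submodule.span_induction with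
      | mem x hx =>
        obtain ⟨i, rfl⟩ := hx
        exact sigma_bar hσ2 (sr i)
      | zero => show wX (tV 0) = 0; simp
      | add x y _ _ hx hy =>
        show wX (tV (x + y)) = x + y
        rw [map_add, map_add]
        exact congrArg₂ (· + ·) hx hy
      | smul a x _ hx =>
        show wX (tV (a • x)) = a • x
        rw [map_smul, map_smul]
        exact congrArg (a • ·) hx
  -- span equality for Part 2
  have hspan_eq : Submodule.span ℚ (Set.range fun i => bar (σmap wX tV) (sr i)) =
      Submodule.span ℚ (restRoots (σmap wX tV) Φ) := by
    apply le_antisymm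
    · rw [Submodule.span_le]
      rintro u ⟨i, rfl⟩
      by_cases hiX : i ∈ (↑X : Set I)
      · simp only
        rw [bar_sr_X htV hτ2 hτX hwsr hiX]
        exact Submodule.zero_mem _
      · exact Submodule.subset_span ⟨bar_sr_ne hs hwm htV hiX, sr i, hΦ.1 i, rfl⟩
    · rw [Submodule.span_le]
      rintro u ⟨hu0, l, hl, rfl⟩
      have : bar (σmap wX tV) l ∈ {v : I → ℚ | σmap wX tV v = v} := sigma_bar hσ2 l
      rw [key1] at this
      exact this
  refine ⟨key1, by rw [key1, hspan_eq], ?_⟩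
  -- Part 3
  intro l hl hQ _hne
  choose n hn using hQ
  refine ⟨fun i => n i + if τ i = i then 0 else n (τ i), ?_⟩
  have hIsub : Istar ⊆ Xᶜ := fun i hi => Finset.mem_compl.mpr (hIX i hi)
  have h1 : bar (σmap wX tV) l = ∑ j, (n j : ℚ) • bar (σmap wX tV) (sr j) := by
    rw [bar_eq_barL]
    conv_lhs => rw [sr_decomp l, map_sum]
    refine Finset.sum_congr rfl fun j _ => ?_
    rw [map_smul, ← bar_eq_barL, hn j]
  have h2 : bar (σmap wX tV) l = ∑ j ∈ Xᶜ, (n j : ℚ) • bar (σmap wX tV) (sr j) := by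
    rw [h1, ← Finset.sum_compl_add_sum X]
    have hz : ∑ j ∈ X, (n j : ℚ) • bar (σmap wX tV) (sr j) = 0 :=
      Finset.sum_eq_zero fun j hj => by
        rw [bar_sr_X htV hτ2 hτX hwsr (Finset.mem_coe.mpr hj), smul_zero]
    rw [hz, add_zero]
  have h3 : ∑ j ∈ Xᶜ \ Istar, (n j : ℚ) • bar (σmap wX tV) (sr j) =
      ∑ i ∈ Istar.filter (fun i => ¬ τ i = i), (n (τ i) : ℚ) • bar (σmap wX tV) (sr i) := by
    refine Finset.sum_nbij' τ τ ?_ ?_ ?_ ?_ ?_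
    · intro a ha
      rw [Finset.mem_sdiff, Finset.mem_compl] at ha
      obtain ⟨haX, haI⟩ := ha
      have hτa : τ a ∈ Istar := (hIcov a haX).resolve_left haI
      refine Finset.mem_filter.mpr ⟨hτa, fun hcon => ?_⟩
      rw [hτ2] at hcon
      exact haI (hcon ▸ hτa)
    · intro a ha
      rw [Finset.mem_filter] at ha
      obtain ⟨haI, haτ⟩ := ha
      rw [Finset.mem_sdiff, Finset.mem_compl]
      constructor
      · intro hcon
        have : τ (τ a) ∈ (↑X : Set I) := hτX (τ a) (Finset.mem_coe.mpr hcon)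
        rw [hτ2] at this
        exact hIX a haI (Finset.mem_coe.mp this)
      · intro hcon
        exact haτ (hIfix a haI hcon)
    · intro a _; exact hτ2 a
    · intro a _; exact hτ2 a
    · intro a ha
      rw [Finset.mem_sdiff, Finset.mem_compl] at ha
      rw [hτ2, bar_tau hs hwm htV hτ2 hτX hwsr hσ2 a]
  have h4 : ∀ i : I, ((n i + if τ i = i then 0 else n (τ i) : ℕ) : ℚ) • bar (σmap wX tV) (sr i)
      = (n i : ℚ) • bar (σmap wX tV) (sr i) +
        (if ¬ τ i = i then (n (τ i) : ℚ) • bar (σmap wX tV) (sr i) else 0) := by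
    intro i
    by_cases h : τ i = i <;> simp [h, add_smul]
  have h5 : ∑ i ∈ Istar, ((n i + if τ i = i then 0 else n (τ i) : ℕ) : ℚ) •
        bar (σmap wX tV) (sr i)
      = ∑ i ∈ Istar.filter (fun i => ¬ τ i = i), (n (τ i) : ℚ) • bar (σmap wX tV) (sr i) +
        ∑ i ∈ Istar, (n i : ℚ) • bar (σmap wX tV) (sr i) := by
    rw [Finset.sum_congr rfl (fun i _ => h4 i), Finset.sum_add_distrib, ← Finset.sum_filter,
      add_comm]
  rw [h2, ← Finset.sum_sdiff hIsub, h3, h5]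

end KMStmt
end
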